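/- arXiv:2411.07662 — 9 statements merged into one kernel-verified Lean document; each statement's English description precedes it below -/
import Mathlib

section
/- For every permutation π of size k, the (3k)×(3k) matrix Γ(π) with block form [[0, I, 0], [I, −P_π, I], [0, I, 0]], where I is the k×k identity matrix and P_π is the permutation matrix of π, is an alternating sign matrix. -/
def IsASM {n : ℕ} (A : Matrix (Fin n) (Fin n) ℤ) : Prop :=
  (∀ i j, A i j = -1 ∨ A i j = 0 ∨ A i j = 1) ∧
  (∀ i, ∑ j, A i j = 1) ∧
  (∀ j, ∑ i, A i j = 1) ∧
  (∀ i j, ∑ l ∈ Finset.Iic j, A i l = 0 ∨ ∑ l ∈ Finset.Iic j, A i l = 1) ∧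
  (∀ i j, ∑ l ∈ Finset.Iic i, A l j = 0 ∨ ∑ l ∈ Finset.Iic i, A l j = 1)

def Gamma (k : ℕ) (π : Equiv.Perm (Fin k)) : Matrix (Fin (3*k)) (Fin (3*k)) ℤ :=
  fun i j =>
    if hi : (i : ℕ) < k then (if (j : ℕ) = k + (i : ℕ) then 1 else 0)
    else if hi2 : (i : ℕ) < 2*k then
      if (j : ℕ) = (i : ℕ) - k then 1
      else if (j : ℕ) = k + ((π ⟨(i : ℕ) - k, by omega⟩ : Fin k) : ℕ) then -1
      else if (j : ℕ) = 2*k + ((i : ℕ) - k) then 1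
      else 0
    else (if (j : ℕ) = k + ((i : ℕ) - 2*k) then 1 else 0)

lemma Gamma_row_lo {k : ℕ} (π : Equiv.Perm (Fin k)) (i : Fin (3*k)) (h1 : (i:ℕ) < k)
    (j : Fin (3*k)) : Gamma k π i j = if (j:ℕ) = k + (i:ℕ) then 1 else 0 := by
  unfold Gamma; rw [dif_pos h1]

lemma Gamma_row_hi {k : ℕ} (π : Equiv.Perm (Fin k)) (i : Fin (3*k)) (h1 : 2*k ≤ (i:ℕ))
    (j : Fin (3*k)) : Gamma k π i j = if (j:ℕ) = k + ((i:ℕ) - 2*k) then 1 else 0 := by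
  unfold Gamma; rw [dif_neg (by omega), dif_neg (by omega)]

lemma Gamma_row_mid {k : ℕ} (π : Equiv.Perm (Fin k)) (i : Fin (3*k)) (a : Fin k)
    (ha : (i:ℕ) = k + (a:ℕ)) (j : Fin (3*k)) :
    Gamma k π i j = (if (j:ℕ) = (a:ℕ) then 1 else 0)
      + (if (j:ℕ) = k + ((π a : Fin k):ℕ) then -1 else 0)
      + (if (j:ℕ) = 2*k + (a:ℕ) then 1 else 0) := by
  have hak := a.isLt
  have hpk := (π a).isLt
  unfold Gamma
  rw [dif_neg (by omega), dif_pos (show (i:ℕ) < 2*k by omega)]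
  have hmk : (⟨(i:ℕ)-k, by omega⟩ : Fin k) = a := Fin.ext (show (i:ℕ)-k = (a:ℕ) by omega)
  rw [hmk]
  split_ifs <;> omega

lemma Gamma_col_lo {k : ℕ} (π : Equiv.Perm (Fin k)) (j : Fin (3*k)) (hj : (j:ℕ) < k)
    (i : Fin (3*k)) : Gamma k π i j = if (i:ℕ) = k + (j:ℕ) then 1 else 0 := by
  have h3 := i.isLt
  by_cases h1 : (i:ℕ) < k
  · rw [Gamma_row_lo π i h1 j]; split_ifs <;> omega
  · by_cases h2 : (i:ℕ) < 2*k
    · obtain ⟨a, ha⟩ : ∃ a : Fin k, (i:ℕ) = k + (a:ℕ) :=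
        ⟨⟨(i:ℕ)-k, by omega⟩, show (i:ℕ) = k + ((i:ℕ)-k) by omega⟩
      have hak := a.isLt
      have hpk := (π a).isLt
      rw [Gamma_row_mid π i a ha j]
      split_ifs <;> omega
    · rw [Gamma_row_hi π i (by omega) j]; split_ifs <;> omega

lemma Gamma_col_hi {k : ℕ} (π : Equiv.Perm (Fin k)) (j : Fin (3*k)) (hj : 2*k ≤ (j:ℕ))
    (i : Fin (3*k)) : Gamma k π i j = if (i:ℕ) = (j:ℕ) - k then 1 else 0 := by
  have h3 := i.isLt
  have h4 := j.isLt
  by_cases h1 : (i:ℕ) < k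
  · rw [Gamma_row_lo π i h1 j]; split_ifs <;> omega
  · by_cases h2 : (i:ℕ) < 2*k
    · obtain ⟨a, ha⟩ : ∃ a : Fin k, (i:ℕ) = k + (a:ℕ) :=
        ⟨⟨(i:ℕ)-k, by omega⟩, show (i:ℕ) = k + ((i:ℕ)-k) by omega⟩
      have hak := a.isLt
      have hpk := (π a).isLt
      rw [Gamma_row_mid π i a ha j]
      split_ifs <;> omega
    · rw [Gamma_row_hi π i (by omega) j]; split_ifs <;> omega

lemma Gamma_col_mid {k : ℕ} (π : Equiv.Perm (Fin k)) (j : Fin (3*k)) (b : Fin k)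
    (hb : (j:ℕ) = k + (b:ℕ)) (i : Fin (3*k)) :
    Gamma k π i j = (if (i:ℕ) = (b:ℕ) then 1 else 0)
      + (if (i:ℕ) = k + ((π.symm b : Fin k):ℕ) then -1 else 0)
      + (if (i:ℕ) = 2*k + (b:ℕ) then 1 else 0) := by
  have h3 := i.isLt
  have hbk := b.isLt
  have hsk := (π.symm b).isLt
  by_cases h1 : (i:ℕ) < k
  · rw [Gamma_row_lo π i h1 j]; split_ifs <;> omega
  · by_cases h2 : (i:ℕ) < 2*k
    · obtain ⟨a, ha⟩ : ∃ a : Fin k, (i:ℕ) = k + (a:ℕ) :=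
        ⟨⟨(i:ℕ)-k, by omega⟩, show (i:ℕ) = k + ((i:ℕ)-k) by omega⟩
      have hak := a.isLt
      have hpk := (π a).isLt
      rw [Gamma_row_mid π i a ha j]
      have key : ((j:ℕ) = k + ((π a : Fin k):ℕ)) ↔ ((i:ℕ) = k + ((π.symm b : Fin k):ℕ)) := by
        constructor
        · intro h
          have hh : π a = b := Fin.ext (by omega)
          rw [← hh, Equiv.symm_apply_apply]
          omega
        · intro h
          have hh : a = π.symm b := Fin.ext (by omega)
          rw [hh, Equiv.apply_symm_apply]
          omega
      rw [if_neg (show ¬(j:ℕ) = (a:ℕ) by omega),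
        if_neg (show ¬(j:ℕ) = 2*k+(a:ℕ) by omega),
        if_neg (show ¬(i:ℕ) = (b:ℕ) by omega),
        if_neg (show ¬(i:ℕ) = 2*k+(b:ℕ) by omega)]
      by_cases hc : (i:ℕ) = k + ((π.symm b : Fin k):ℕ)
      · rw [if_pos (key.mpr hc), if_pos hc]
      · rw [if_neg (fun h => hc (key.mp h)), if_neg hc]
    · rw [Gamma_row_hi π i (by omega) j]; split_ifs <;> omega

lemma ind_sum {n : ℕ} (j : Fin n) (c : ℕ) (hc : c < n) (x : ℤ) :
    ∑ l ∈ Finset.Iic j, (if (l:ℕ) = c then x else 0)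
      = if c ≤ (j:ℕ) then x else 0 := by
  have h : ∀ l : Fin n, ((l:ℕ) = c) ↔ (l = ⟨c, hc⟩) := by
    intro l; simp [Fin.ext_iff]
  simp only [h]
  rw [Finset.sum_ite_eq' (Finset.Iic j) (⟨c,hc⟩ : Fin n) (fun _ => x)]
  simp [Finset.mem_Iic, Fin.le_def]

lemma ind_sum_univ {n : ℕ} (c : ℕ) (hc : c < n) (x : ℤ) :
    ∑ l : Fin n, (if (l:ℕ) = c then x else 0) = x := by
  have h : ∀ l : Fin n, ((l:ℕ) = c) ↔ (l = ⟨c, hc⟩) := by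
    intro l; simp [Fin.ext_iff]
  simp only [h]
  rw [Finset.sum_ite_eq' Finset.univ (⟨c,hc⟩ : Fin n) (fun _ => x)]
  simp

theorem statement2 (k : ℕ) (π : Equiv.Perm (Fin k)) : IsASM (Gamma k π) := by
  refine ⟨?_, ?_, ?_, ?_, ?_⟩
  · intro i j
    unfold Gamma
    split_ifs <;> simp
  · -- row sums
    intro i
    have h3 := i.isLt
    by_cases h1 : (i:ℕ) < k
    · rw [Finset.sum_congr rfl fun j _ => Gamma_row_lo π i h1 j]
      exact ind_sum_univ (k + (i:ℕ)) (by omega) 1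
    · by_cases h2 : (i:ℕ) < 2*k
      · obtain ⟨a, ha⟩ : ∃ a : Fin k, (i:ℕ) = k + (a:ℕ) :=
          ⟨⟨(i:ℕ)-k, by omega⟩, show (i:ℕ) = k + ((i:ℕ)-k) by omega⟩
        have hak := a.isLt
        have hpk := (π a).isLt
        rw [Finset.sum_congr rfl fun j _ => Gamma_row_mid π i a ha j,
          Finset.sum_add_distrib, Finset.sum_add_distrib,
          ind_sum_univ _ (by omega : (a:ℕ) < 3*k) 1,
          ind_sum_univ _ (by omega : k + ((π a : Fin k):ℕ) < 3*k) (-1),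
          ind_sum_univ _ (by omega : 2*k + (a:ℕ) < 3*k) 1]
        ring
      · rw [Finset.sum_congr rfl fun j _ => Gamma_row_hi π i (by omega) j]
        exact ind_sum_univ (k + ((i:ℕ) - 2*k)) (by omega) 1
  · -- column sums
    intro j
    have h3 := j.isLt
    by_cases h1 : (j:ℕ) < k
    · rw [Finset.sum_congr rfl fun i _ => Gamma_col_lo π j h1 i]
      exact ind_sum_univ (k + (j:ℕ)) (by omega) 1
    · by_cases h2 : (j:ℕ) < 2*k
      · obtain ⟨b, hb⟩ : ∃ b : Fin k, (j:ℕ) = k + (b:ℕ) :=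
          ⟨⟨(j:ℕ)-k, by omega⟩, show (j:ℕ) = k + ((j:ℕ)-k) by omega⟩
        have hbk := b.isLt
        have hsk := (π.symm b).isLt
        rw [Finset.sum_congr rfl fun i _ => Gamma_col_mid π j b hb i,
          Finset.sum_add_distrib, Finset.sum_add_distrib,
          ind_sum_univ _ (by omega : (b:ℕ) < 3*k) 1,
          ind_sum_univ _ (by omega : k + ((π.symm b : Fin k):ℕ) < 3*k) (-1),
          ind_sum_univ _ (by omega : 2*k + (b:ℕ) < 3*k) 1]
        ring
      · rw [Finset.sum_congr rfl fun i _ => Gamma_col_hi π j (by omega) i]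
        exact ind_sum_univ ((j:ℕ) - k) (by omega) 1
  · -- row partial sums
    intro i j
    have h3 := i.isLt
    by_cases h1 : (i:ℕ) < k
    · rw [Finset.sum_congr rfl fun l _ => Gamma_row_lo π i h1 l,
        ind_sum j _ (by omega : k + (i:ℕ) < 3*k) 1]
      split_ifs <;> simp
    · by_cases h2 : (i:ℕ) < 2*k
      · obtain ⟨a, ha⟩ : ∃ a : Fin k, (i:ℕ) = k + (a:ℕ) :=
          ⟨⟨(i:ℕ)-k, by omega⟩, show (i:ℕ) = k + ((i:ℕ)-k) by omega⟩
        have hak := a.isLt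
        have hpk := (π a).isLt
        rw [Finset.sum_congr rfl fun l _ => Gamma_row_mid π i a ha l,
          Finset.sum_add_distrib, Finset.sum_add_distrib,
          ind_sum j _ (by omega : (a:ℕ) < 3*k) 1,
          ind_sum j _ (by omega : k + ((π a : Fin k):ℕ) < 3*k) (-1),
          ind_sum j _ (by omega : 2*k + (a:ℕ) < 3*k) 1]
        split_ifs <;> omega
      · rw [Finset.sum_congr rfl fun l _ => Gamma_row_hi π i (by omega) l,
          ind_sum j _ (by omega : k + ((i:ℕ) - 2*k) < 3*k) 1]
        split_ifs <;> simp
  · -- column partial sums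
    intro i j
    have h3 := j.isLt
    by_cases h1 : (j:ℕ) < k
    · rw [Finset.sum_congr rfl fun l _ => Gamma_col_lo π j h1 l,
        ind_sum i _ (by omega : k + (j:ℕ) < 3*k) 1]
      split_ifs <;> simp
    · by_cases h2 : (j:ℕ) < 2*k
      · obtain ⟨b, hb⟩ : ∃ b : Fin k, (j:ℕ) = k + (b:ℕ) :=
          ⟨⟨(j:ℕ)-k, by omega⟩, show (j:ℕ) = k + ((j:ℕ)-k) by omega⟩
        have hbk := b.isLt
        have hsk := (π.symm b).isLt
        rw [Finset.sum_congr rfl fun l _ => Gamma_col_mid π j b hb l,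
          Finset.sum_add_distrib, Finset.sum_add_distrib,
          ind_sum i _ (by omega : (b:ℕ) < 3*k) 1,
          ind_sum i _ (by omega : k + ((π.symm b : Fin k):ℕ) < 3*k) (-1),
          ind_sum i _ (by omega : 2*k + (b:ℕ) < 3*k) 1]
        split_ifs <;> omega
      · rw [Finset.sum_congr rfl fun l _ => Gamma_col_hi π j (by omega) l,
          ind_sum i _ (by omega : (j:ℕ) - k < 3*k) 1]
        split_ifs <;> simp
end

section
/- For every permutation π of size k, the ASM Γ(π) with block form [[0, I, 0], [I, −P_π, I], [0, I, 0]] classically avoids the pattern 321; that is, there do not exist rows i_1 < i_2 < i_3 and columns j_1 < j_2 < j_3 with Γ(π) having entry 1 in positions (i_1, j_3), (i_2, j_2), (i_3, j_1). -/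
def ASMContains {n m : ℕ} (A : Matrix (Fin n) (Fin n) ℤ) (σ : Equiv.Perm (Fin m)) : Prop :=
  ∃ f g : Fin m ↪o Fin n, ∀ a, A (f a) (g (σ a)) = 1

def ASMAvoids {n m : ℕ} (A : Matrix (Fin n) (Fin n) ℤ) (σ : Equiv.Perm (Fin m)) : Prop :=
  ¬ ASMContains A σ

def p321 : Equiv.Perm (Fin 3) := ⟨![2,1,0], ![2,1,0], by decide, by decide⟩

lemma gamma_one {k : ℕ} (π : Equiv.Perm (Fin k)) (i j : Fin (3*k))
    (h : Gamma k π i j = 1) : (i : ℕ) + k = j ∨ (j : ℕ) + k = i := by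
  unfold Gamma at h
  split_ifs at h with h1 h2 h3 h4 h5 h6 <;> omega

theorem statement3 (k : ℕ) (π : Equiv.Perm (Fin k)) : ASMAvoids (Gamma k π) p321 := by
  rintro ⟨f, g, hfg⟩
  have h0 := gamma_one π _ _ (hfg 0)
  have h1 := gamma_one π _ _ (hfg 1)
  have h2 := gamma_one π _ _ (hfg 2)
  have hf01 : (f 0 : ℕ) < f 1 := f.strictMono (by decide)
  have hf12 : (f 1 : ℕ) < f 2 := f.strictMono (by decide)
  have hg01 : (g 0 : ℕ) < g 1 := g.strictMono (by decide)
  have hg12 : (g 1 : ℕ) < g 2 := g.strictMono (by decide)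
  have e0 : p321 0 = 2 := by decide
  have e1 : p321 1 = 1 := by decide
  have e2 : p321 2 = 0 := by decide
  rw [e0] at h0; rw [e1] at h1; rw [e2] at h2
  omega
end

section
/- For every permutation σ that contains the pattern 321 and every n, the number of n×n alternating sign matrices classically avoiding σ is at least ⌊n/3⌋!. -/
def PermContains {n k : ℕ} (π : Equiv.Perm (Fin n)) (τ : Equiv.Perm (Fin k)) : Prop :=
  ∃ f : Fin k ↪o Fin n, ∀ a b : Fin k, τ a < τ b ↔ π (f a) < π (f b)

def p123 : Equiv.Perm (Fin 3) := Equiv.refl _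
def pnat {k : ℕ} (π : Equiv.Perm (Fin k)) (t : ℕ) : ℕ :=
  if h : t < k then (π ⟨t, h⟩ : ℕ) else 0

lemma pnat_lt {k : ℕ} (π : Equiv.Perm (Fin k)) {t : ℕ} (ht : t < k) : pnat π t < k := by
  unfold pnat
  rw [dif_pos ht]
  exact (π ⟨t, ht⟩).isLt

lemma pnat_fin {k : ℕ} (π : Equiv.Perm (Fin k)) (a : Fin k) : pnat π (a : ℕ) = (π a : ℕ) := by
  unfold pnat
  rw [dif_pos a.isLt]

def Amat (n k : ℕ) (π : Equiv.Perm (Fin k)) : Matrix (Fin n) (Fin n) ℤ := fun i j =>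
  if (i : ℕ) < k then (if (j : ℕ) = k + (i : ℕ) then 1 else 0)
  else if (i : ℕ) < 2*k then
    (if (j : ℕ) + k = (i : ℕ) then 1
     else if (j : ℕ) = k + pnat π ((i : ℕ) - k) then -1
     else if (j : ℕ) = k + (i : ℕ) then 1 else 0)
  else if (i : ℕ) < 3*k then (if (j : ℕ) + k = (i : ℕ) then 1 else 0)
  else (if (j : ℕ) = (i : ℕ) then 1 else 0)

section rows
variable {n k : ℕ} (π : Equiv.Perm (Fin k)) (i j : Fin n)

lemma row0 (hi : (i : ℕ) < k) :
    Amat n k π i j = if (j : ℕ) = k + (i : ℕ) then 1 else 0 := by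
  simp only [Amat]; rw [if_pos hi]

lemma row1 (hi1 : k ≤ (i : ℕ)) (hi2 : (i : ℕ) < 2*k) :
    Amat n k π i j = (if (j : ℕ) = (i : ℕ) - k then 1 else 0)
      + (if (j : ℕ) = k + pnat π ((i : ℕ) - k) then -1 else 0)
      + (if (j : ℕ) = k + (i : ℕ) then 1 else 0) := by
  have hp : pnat π ((i : ℕ) - k) < k := pnat_lt π (by omega)
  simp only [Amat]
  split_ifs <;> omega

lemma row2 (hi1 : 2*k ≤ (i : ℕ)) (hi2 : (i : ℕ) < 3*k) :
    Amat n k π i j = if (j : ℕ) = (i : ℕ) - k then 1 else 0 := by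
  simp only [Amat]
  split_ifs <;> omega

lemma row3 (hi : 3*k ≤ (i : ℕ)) :
    Amat n k π i j = if (j : ℕ) = (i : ℕ) then 1 else 0 := by
  simp only [Amat]
  split_ifs <;> omega

lemma col0 (hj : (j : ℕ) < k) :
    Amat n k π i j = if (i : ℕ) = k + (j : ℕ) then 1 else 0 := by
  simp only [Amat, pnat]
  split_ifs <;> omega

lemma col1 (b : Fin k) (hb : (j : ℕ) = k + (b : ℕ)) :
    Amat n k π i j = (if (i : ℕ) = (j : ℕ) - k then 1 else 0)
      + (if (i : ℕ) = k + ((π.symm b : Fin k) : ℕ) then -1 else 0)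
      + (if (i : ℕ) = k + (j : ℕ) then 1 else 0) := by
  have hs : ((π.symm b : Fin k) : ℕ) < k := (π.symm b).isLt
  have hbk : (b : ℕ) < k := b.isLt
  by_cases h1 : (i : ℕ) < k
  · simp only [Amat]; rw [if_pos h1]; split_ifs <;> omega
  · by_cases h2 : (i : ℕ) < 2*k
    · have hd : (i : ℕ) - k < k := by omega
      have hmid : ((j : ℕ) = k + pnat π ((i : ℕ) - k)) ↔
          ((i : ℕ) = k + ((π.symm b : Fin k) : ℕ)) := by
        unfold pnat
        rw [dif_pos hd]
        constructor
        · intro h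
          have hpe : π ⟨(i : ℕ) - k, hd⟩ = b := Fin.ext (by omega)
          have h2' : π.symm b = ⟨(i : ℕ) - k, hd⟩ := by
            rw [← hpe, Equiv.symm_apply_apply]
          have := congrArg Fin.val h2'
          simp at this
          omega
        · intro h
          have h2' : π.symm b = ⟨(i : ℕ) - k, hd⟩ := Fin.ext (by simp; omega)
          have h3' : π ⟨(i : ℕ) - k, hd⟩ = b := by
            rw [← h2', Equiv.apply_symm_apply]
          have := congrArg Fin.val h3'
          omega
      simp only [Amat]
      rw [if_neg h1, if_pos h2]
      simp only [hmid]
      split_ifs <;> omega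
    · by_cases h3 : (i : ℕ) < 3*k
      · simp only [Amat]; rw [if_neg h1, if_neg h2, if_pos h3]; split_ifs <;> omega
      · simp only [Amat]; rw [if_neg h1, if_neg h2, if_neg h3]; split_ifs <;> omega

lemma col2 (hj1 : 2*k ≤ (j : ℕ)) (hj2 : (j : ℕ) < 3*k) :
    Amat n k π i j = if (i : ℕ) = (j : ℕ) - k then 1 else 0 := by
  simp only [Amat, pnat]
  split_ifs <;> omega

lemma col3 (hj : 3*k ≤ (j : ℕ)) :
    Amat n k π i j = if (i : ℕ) = (j : ℕ) then 1 else 0 := by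
  simp only [Amat, pnat]
  split_ifs <;> omega

end rows

lemma ite_val_eq {n : ℕ} (c : ℕ) (hc : c < n) (v : ℤ) (j : Fin n) :
    (if (j : ℕ) = c then v else 0) = if j = ⟨c, hc⟩ then v else 0 := by
  simp [Fin.ext_iff]

lemma sum_ite_val {n : ℕ} (c : ℕ) (hc : c < n) (v : ℤ) :
    ∑ j : Fin n, (if (j : ℕ) = c then v else 0) = v := by
  simp only [ite_val_eq c hc v]
  rw [Finset.sum_ite_eq' Finset.univ (⟨c, hc⟩ : Fin n) (fun _ => v)]
  simp

lemma sum_Iic_ite_val {n : ℕ} (J : Fin n) (c : ℕ) (hc : c < n) (v : ℤ) :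
    ∑ j ∈ Finset.Iic J, (if (j : ℕ) = c then v else 0) = if c ≤ (J : ℕ) then v else 0 := by
  simp only [ite_val_eq c hc v]
  rw [Finset.sum_ite_eq' (Finset.Iic J) (⟨c, hc⟩ : Fin n) (fun _ => v)]
  simp [Finset.mem_Iic, Fin.le_def]

lemma amat_isASM {n k : ℕ} (hkn : 3*k ≤ n) (π : Equiv.Perm (Fin k)) :
    IsASM (Amat n k π) := by
  refine ⟨?_, ?_, ?_, ?_, ?_⟩
  · -- entries
    intro i j
    simp only [Amat]
    split_ifs <;> simp
  · -- row sums
    intro i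
    by_cases h1 : (i : ℕ) < k
    · rw [Finset.sum_congr rfl (fun j _ => row0 π i j h1)]
      exact sum_ite_val _ (by omega) 1
    · by_cases h2 : (i : ℕ) < 2*k
      · have hp : pnat π ((i : ℕ) - k) < k := pnat_lt π (by omega)
        rw [Finset.sum_congr rfl (fun j _ => row1 π i j (by omega) h2)]
        rw [Finset.sum_add_distrib, Finset.sum_add_distrib,
          sum_ite_val ((i:ℕ)-k) (by omega) 1,
          sum_ite_val (k + pnat π ((i:ℕ)-k)) (by omega) (-1),
          sum_ite_val (k + (i:ℕ)) (by omega) 1]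
        ring
      · by_cases h3 : (i : ℕ) < 3*k
        · rw [Finset.sum_congr rfl (fun j _ => row2 π i j (by omega) h3)]
          exact sum_ite_val _ (by omega) 1
        · rw [Finset.sum_congr rfl (fun j _ => row3 π i j (by omega))]
          exact sum_ite_val _ i.isLt 1
  · -- col sums
    intro j
    by_cases h1 : (j : ℕ) < k
    · rw [Finset.sum_congr rfl (fun i _ => col0 π i j h1)]
      exact sum_ite_val _ (by omega) 1
    · by_cases h2 : (j : ℕ) < 2*k
      · set b : Fin k := ⟨(j:ℕ) - k, by omega⟩ with hbdef
        have hb : (j : ℕ) = k + (b : ℕ) := by simp [hbdef]; omega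
        have hs : ((π.symm b : Fin k) : ℕ) < k := (π.symm b).isLt
        rw [Finset.sum_congr rfl (fun i _ => col1 π i j b hb)]
        rw [Finset.sum_add_distrib, Finset.sum_add_distrib,
          sum_ite_val ((j:ℕ)-k) (by omega) 1,
          sum_ite_val (k + ((π.symm b : Fin k) : ℕ)) (by omega) (-1),
          sum_ite_val (k + (j:ℕ)) (by omega) 1]
        ring
      · by_cases h3 : (j : ℕ) < 3*k
        · rw [Finset.sum_congr rfl (fun i _ => col2 π i j (by omega) h3)]
          exact sum_ite_val _ (by omega) 1
        · rw [Finset.sum_congr rfl (fun i _ => col3 π i j (by omega))]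
          exact sum_ite_val _ j.isLt 1
  · -- partial row sums
    intro i J
    by_cases h1 : (i : ℕ) < k
    · rw [Finset.sum_congr rfl (fun j _ => row0 π i j h1)]
      rw [sum_Iic_ite_val J _ (by omega) 1]
      split_ifs <;> omega
    · by_cases h2 : (i : ℕ) < 2*k
      · have hp : pnat π ((i : ℕ) - k) < k := pnat_lt π (by omega)
        rw [Finset.sum_congr rfl (fun j _ => row1 π i j (by omega) h2)]
        rw [Finset.sum_add_distrib, Finset.sum_add_distrib,
          sum_Iic_ite_val J ((i:ℕ)-k) (by omega) 1,
          sum_Iic_ite_val J (k + pnat π ((i:ℕ)-k)) (by omega) (-1),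
          sum_Iic_ite_val J (k + (i:ℕ)) (by omega) 1]
        split_ifs <;> omega
      · by_cases h3 : (i : ℕ) < 3*k
        · rw [Finset.sum_congr rfl (fun j _ => row2 π i j (by omega) h3)]
          rw [sum_Iic_ite_val J _ (by omega) 1]
          split_ifs <;> omega
        · rw [Finset.sum_congr rfl (fun j _ => row3 π i j (by omega))]
          rw [sum_Iic_ite_val J _ i.isLt 1]
          split_ifs <;> omega
  · -- partial col sums
    intro J j
    by_cases h1 : (j : ℕ) < k
    · rw [Finset.sum_congr rfl (fun i _ => col0 π i j h1)]
      rw [sum_Iic_ite_val J _ (by omega) 1]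
      split_ifs <;> omega
    · by_cases h2 : (j : ℕ) < 2*k
      · set b : Fin k := ⟨(j:ℕ) - k, by omega⟩ with hbdef
        have hb : (j : ℕ) = k + (b : ℕ) := by simp [hbdef]; omega
        have hs : ((π.symm b : Fin k) : ℕ) < k := (π.symm b).isLt
        rw [Finset.sum_congr rfl (fun i _ => col1 π i j b hb)]
        rw [Finset.sum_add_distrib, Finset.sum_add_distrib,
          sum_Iic_ite_val J ((j:ℕ)-k) (by omega) 1,
          sum_Iic_ite_val J (k + ((π.symm b : Fin k) : ℕ)) (by omega) (-1),
          sum_Iic_ite_val J (k + (j:ℕ)) (by omega) 1]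
        split_ifs <;> omega
      · by_cases h3 : (j : ℕ) < 3*k
        · rw [Finset.sum_congr rfl (fun i _ => col2 π i j (by omega) h3)]
          rw [sum_Iic_ite_val J _ (by omega) 1]
          split_ifs <;> omega
        · rw [Finset.sum_congr rfl (fun i _ => col3 π i j (by omega))]
          rw [sum_Iic_ite_val J _ j.isLt 1]
          split_ifs <;> omega

lemma amat_one {n k : ℕ} (π : Equiv.Perm (Fin k)) {r c : Fin n}
    (h : Amat n k π r c = 1) :
    ((c : ℕ) = (r : ℕ) + k) ∨ ((r : ℕ) = (c : ℕ) + k ∧ (r : ℕ) < 3*k) ∨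
      ((r : ℕ) = (c : ℕ) ∧ 3*k ≤ (r : ℕ)) := by
  simp only [Amat] at h
  split_ifs at h <;> omega

lemma amat_avoids_p321 {n k : ℕ} (π : Equiv.Perm (Fin k)) :
    ASMAvoids (Amat n k π) p321 := by
  rintro ⟨f, g, h⟩
  have h0 := h 0
  have h1 := h 1
  have h2 := h 2
  rw [show p321 0 = 2 from by decide] at h0
  rw [show p321 1 = 1 from by decide] at h1
  rw [show p321 2 = 0 from by decide] at h2
  have hf01 : ((f 0 : Fin n) : ℕ) < ((f 1 : Fin n) : ℕ) :=
    Fin.lt_def.mp (f.strictMono (show (0 : Fin 3) < 1 by decide))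
  have hf12 : ((f 1 : Fin n) : ℕ) < ((f 2 : Fin n) : ℕ) :=
    Fin.lt_def.mp (f.strictMono (show (1 : Fin 3) < 2 by decide))
  have hg01 : ((g 0 : Fin n) : ℕ) < ((g 1 : Fin n) : ℕ) :=
    Fin.lt_def.mp (g.strictMono (show (0 : Fin 3) < 1 by decide))
  have hg12 : ((g 1 : Fin n) : ℕ) < ((g 2 : Fin n) : ℕ) :=
    Fin.lt_def.mp (g.strictMono (show (1 : Fin 3) < 2 by decide))
  rcases amat_one π h0 with c0 | c0 | c0 <;>
    rcases amat_one π h1 with c1 | c1 | c1 <;>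
      rcases amat_one π h2 with c2 | c2 | c2 <;> omega

lemma contains_trans {n m k : ℕ} {A : Matrix (Fin n) (Fin n) ℤ}
    {σ : Equiv.Perm (Fin m)} {τ : Equiv.Perm (Fin k)}
    (hA : ASMContains A σ) (hστ : PermContains σ τ) : ASMContains A τ := by
  obtain ⟨F, G, hFG⟩ := hA
  obtain ⟨f, hf⟩ := hστ
  refine ⟨f.trans F, OrderEmbedding.ofStrictMono (fun b => G (σ (f (τ.symm b)))) ?_, ?_⟩
  · intro b b' hlt
    apply G.strictMono
    rw [← hf]
    simpa using hlt
  · intro a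
    show A (F (f a)) (G (σ (f (τ.symm (τ a))))) = 1
    simpa using hFG (f a)

lemma amat_inj {n k : ℕ} (hkn : 3*k ≤ n) :
    Function.Injective (fun π : Equiv.Perm (Fin k) => Amat n k π) := by
  intro π π' h
  apply Equiv.ext
  intro a
  have ha : (a : ℕ) < k := a.isLt
  have hpa : ((π a : Fin k) : ℕ) < k := (π a).isLt
  have hpa' : ((π' a : Fin k) : ℕ) < k := (π' a).isLt
  have E := congrFun (congrFun h (⟨k + (a : ℕ), by omega⟩ : Fin n))
    (⟨k + ((π a : Fin k) : ℕ), by omega⟩ : Fin n)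
  simp only at E
  rw [row1 π _ _ (by simp) (by simp; omega), row1 π' _ _ (by simp) (by simp; omega)] at E
  simp only [Fin.val_mk] at E
  rw [show k + (a:ℕ) - k = (a:ℕ) from by omega, pnat_fin π a, pnat_fin π' a] at E
  apply Fin.ext
  split_ifs at E <;> omega

theorem statement5 {m : ℕ} (σ : Equiv.Perm (Fin m)) (hσ : PermContains σ p321) (n : ℕ) :
    Nat.factorial (n / 3) ≤
      {A : Matrix (Fin n) (Fin n) ℤ | IsASM A ∧ ASMAvoids A σ}.ncard := by
  set k := n / 3 with hk
  have hkn : 3*k ≤ n := by omega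
  set S := {A : Matrix (Fin n) (Fin n) ℤ | IsASM A ∧ ASMAvoids A σ} with hS
  have hfin : S.Finite := by
    have hsub : S ⊆ Set.pi Set.univ
        (fun _ : Fin n => Set.pi Set.univ (fun _ : Fin n => ({-1, 0, 1} : Set ℤ))) := by
      intro A hA
      intro i _
      intro j _
      rcases hA.1.1 i j with h | h | h <;> simp [h]
    exact Set.Finite.subset
      (Set.Finite.pi fun _ => Set.Finite.pi fun _ =>
        (Set.finite_singleton _).insert 0 |>.insert (-1)) hsub
  have hinj : Function.Injective (fun π : Equiv.Perm (Fin k) => Amat n k π) :=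
    amat_inj hkn
  have hsub : (fun π : Equiv.Perm (Fin k) => Amat n k π) '' Set.univ ⊆ S := by
    rintro A ⟨π, -, rfl⟩
    refine ⟨amat_isASM hkn π, fun hc => amat_avoids_p321 π (contains_trans hc hσ)⟩
  calc Nat.factorial k = Fintype.card (Equiv.Perm (Fin k)) := by
        rw [Fintype.card_perm, Fintype.card_fin]
    _ = (Set.univ : Set (Equiv.Perm (Fin k))).ncard := by
        rw [Set.ncard_univ, Nat.card_eq_fintype_card]
    _ = ((fun π : Equiv.Perm (Fin k) => Amat n k π) '' Set.univ).ncard :=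
        (Set.ncard_image_of_injective _ hinj).symm
    _ ≤ S.ncard := Set.ncard_le_ncard hsub hfin
end

section
/- If an alternating sign matrix A has a −1 entry in position (i, j) and another −1 entry in position (i', j') with i > i' and j < j' (one −1 strictly southwest of the other), then A classically contains the permutation pattern 3412. -/
def p2143 : Equiv.Perm (Fin 4) := ⟨![1,0,3,2], ![1,0,3,2], by decide, by decide⟩
def p3412 : Equiv.Perm (Fin 4) := ⟨![2,3,0,1], ![2,3,0,1], by decide, by decide⟩


open Finset

lemma ex_one {n : ℕ} (S : Finset (Fin n)) (f : Fin n → ℤ)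
    (hent : ∀ x, f x = -1 ∨ f x = 0 ∨ f x = 1) (hs : ∑ x ∈ S, f x = 1) :
    ∃ x ∈ S, f x = 1 := by
  by_contra h
  push_neg at h
  have : ∑ x ∈ S, f x ≤ 0 := by
    apply Finset.sum_nonpos
    intro x hx
    rcases hent x with h' | h' | h' <;> first | omega | exact absurd h' (h x hx)
  omega

lemma sum_Iio_mem {n : ℕ} (f : Fin n → ℤ)
    (h : ∀ j, ∑ l ∈ Finset.Iic j, f l = 0 ∨ ∑ l ∈ Finset.Iic j, f l = 1)
    (j : Fin n) : ∑ l ∈ Finset.Iio j, f l = 0 ∨ ∑ l ∈ Finset.Iio j, f l = 1 := by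
  rcases Nat.eq_zero_or_pos j.val with h0 | h0
  · left
    have : Finset.Iio j = ∅ := by
      ext x; simp only [Finset.mem_Iio, Finset.notMem_empty, iff_false, not_lt, Fin.le_def, Fin.lt_def]; omega
    simp [this]
  · have hlt : j.val - 1 < n := by omega
    have : Finset.Iio j = Finset.Iic ⟨j.val - 1, hlt⟩ := by
      ext x; simp only [Finset.mem_Iio, Finset.mem_Iic, Fin.le_def, Fin.lt_def]; omega
    rw [this]; exact h _

lemma key {n : ℕ} (f : Fin n → ℤ)
    (hent : ∀ x, f x = -1 ∨ f x = 0 ∨ f x = 1)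
    (hrow : ∑ x, f x = 1)
    (halt : ∀ j, ∑ l ∈ Finset.Iic j, f l = 0 ∨ ∑ l ∈ Finset.Iic j, f l = 1)
    (j : Fin n) (h : f j = -1) :
    (∃ d, d < j ∧ f d = 1) ∧ (∃ b, j < b ∧ f b = 1) := by
  have hsplit : ∑ l ∈ Finset.Iic j, f l = ∑ l ∈ Finset.Iio j, f l + f j := by
    rw [← Finset.Iio_insert, Finset.sum_insert (by simp)]; ring
  have hio := sum_Iio_mem f halt j
  have hic := halt j
  have hio1 : ∑ l ∈ Finset.Iio j, f l = 1 := by omega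
  have hic0 : ∑ l ∈ Finset.Iic j, f l = 0 := by omega
  constructor
  · obtain ⟨d, hd, hd1⟩ := ex_one _ f hent hio1
    exact ⟨d, by simpa using hd, hd1⟩
  · have hcompl : ∑ l ∈ Finset.Ioi j, f l = 1 := by
      have := Finset.sum_add_sum_compl (Finset.Iic j) f
      have hco : (Finset.Iic j)ᶜ = Finset.Ioi j := by
        ext x; simp
      rw [hco] at this
      omega
    obtain ⟨b, hb, hb1⟩ := ex_one _ f hent hcompl
    exact ⟨b, by simpa using hb, hb1⟩

def emb4 {n : ℕ} (a b c d : Fin n) (h1 : a < b) (h2 : b < c) (h3 : c < d) :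
    Fin 4 ↪o Fin n :=
  OrderEmbedding.ofStrictMono ![a, b, c, d] (by
    intro x y hxy
    fin_cases x <;> fin_cases y <;> simp_all <;>
      first
      | exact h1
      | exact h2
      | exact h3
      | exact h1.trans h2
      | exact h2.trans h3
      | exact (h1.trans h2).trans h3)


theorem statement6 {n : ℕ} (A : Matrix (Fin n) (Fin n) ℤ) (hA : IsASM A)
    (i j i' j' : Fin n) (h1 : A i j = -1) (h2 : A i' j' = -1)
    (hi : i' < i) (hj : j < j') :
    ASMContains A p3412 := by
  obtain ⟨hent, hrow, hcol, haltr, haltc⟩ := hA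
  -- row i: 1 to the left of j
  obtain ⟨⟨d, hd, hd1⟩, -⟩ := key (A i) (hent i) (hrow i) (haltr i) j h1
  -- row i': 1 to the right of j'
  obtain ⟨-, ⟨b, hb, hb1⟩⟩ := key (A i') (hent i') (hrow i') (haltr i') j' h2
  -- column j: 1 below i
  obtain ⟨-, ⟨c, hc, hc1⟩⟩ := key (fun x => A x j) (fun x => hent x j) (hcol j)
    (haltc · j) i h1
  -- column j': 1 above i'
  obtain ⟨⟨a, ha, ha1⟩, -⟩ := key (fun x => A x j') (fun x => hent x j') (hcol j')
    (haltc · j') i' h2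
  refine ⟨emb4 a i' i c ha hi hc, emb4 d j j' b hd hj hb, ?_⟩
  intro x
  fin_cases x <;> simp [p3412, emb4] <;> assumption
end

section
/- If an alternating sign matrix A has a −1 entry strictly northwest of another −1 entry (i.e., −1s at (i,j) and (i',j') with i < i' and j < j'), then A classically contains the permutation pattern 2143. -/
lemma exists_one_of_sum_pos {n : ℕ} (v : Fin n → ℤ) (s : Finset (Fin n))
    (hv : ∀ x, v x = -1 ∨ v x = 0 ∨ v x = 1) (hs : 0 < ∑ x ∈ s, v x) :
    ∃ x ∈ s, v x = 1 := by
  by_contra h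
  push_neg at h
  have : ∑ x ∈ s, v x ≤ 0 := Finset.sum_nonpos (fun x hx => by
    rcases hv x with h' | h' | h' <;> first | omega | exact absurd h' (h x hx))
  omega

lemma sum_Iic_split {n : ℕ} (v : Fin n → ℤ) (j : Fin n) :
    ∑ l ∈ Finset.Iic j, v l = ∑ l ∈ Finset.Iio j, v l + v j := by
  rw [← Finset.Iio_insert, Finset.sum_insert (by simp)]
  ring

lemma exists_left {n : ℕ} (v : Fin n → ℤ) (j : Fin n)
    (hv : ∀ x, v x = -1 ∨ v x = 0 ∨ v x = 1)
    (hp : ∑ l ∈ Finset.Iic j, v l = 0 ∨ ∑ l ∈ Finset.Iic j, v l = 1)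
    (hj : v j = -1) : ∃ b, b < j ∧ v b = 1 := by
  have h1 := sum_Iic_split v j
  have h3 : 0 < ∑ l ∈ Finset.Iio j, v l := by omega
  obtain ⟨b, hb, hb1⟩ := exists_one_of_sum_pos v _ hv h3
  exact ⟨b, Finset.mem_Iio.mp hb, hb1⟩

lemma exists_right {n : ℕ} (v : Fin n → ℤ) (j : Fin n)
    (hv : ∀ x, v x = -1 ∨ v x = 0 ∨ v x = 1)
    (hp : ∀ k, ∑ l ∈ Finset.Iic k, v l = 0 ∨ ∑ l ∈ Finset.Iic k, v l = 1)
    (ht : ∑ l, v l = 1)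
    (hj : v j = -1) : ∃ d, j < d ∧ v d = 1 := by
  have hz : ∑ l ∈ Finset.Iic j, v l = 0 := by
    rcases hp j with h | h
    · exact h
    · exfalso
      have h1 := sum_Iic_split v j
      have h2 : ∑ l ∈ Finset.Iio j, v l = 2 := by omega
      have hj0 : 0 < j.val := by
        by_contra hc0
        have he : Finset.Iio j = ∅ := by
          ext x
          simp only [Finset.mem_Iio, Finset.notMem_empty, iff_false, not_lt, Fin.le_def]
          omega
        rw [he] at h2
        simp at h2
      set k : Fin n := ⟨j.val - 1, by omega⟩ with hk
      have hIio : Finset.Iio j = Finset.Iic k := by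
        ext x
        simp only [Finset.mem_Iio, Finset.mem_Iic, Fin.lt_def, Fin.le_def, hk]
        omega
      rw [hIio] at h2
      rcases hp k with h' | h' <;> omega
  have hcompl : Finset.Ioi j = (Finset.Iic j)ᶜ := by
    ext x
    simp [Finset.mem_Ioi, Finset.mem_Iic, not_le]
  have hc : ∑ l ∈ Finset.Ioi j, v l = 1 := by
    have := Finset.sum_compl_add_sum (Finset.Iic j) v
    rw [← hcompl] at this
    omega
  obtain ⟨d, hd, hd1⟩ := exists_one_of_sum_pos v (Finset.Ioi j) hv (by omega)
  exact ⟨d, Finset.mem_Ioi.mp hd, hd1⟩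

lemma strictMono4 {n : ℕ} (a b c d : Fin n) (h1 : a < b) (h2 : b < c) (h3 : c < d) :
    StrictMono (![a, b, c, d]) := by
  rw [Fin.strictMono_iff_lt_succ]
  intro i
  fin_cases i <;> simpa

theorem statement7 {n : ℕ} (A : Matrix (Fin n) (Fin n) ℤ) (hA : IsASM A)
    (i j i' j' : Fin n) (h1 : A i j = -1) (h2 : A i' j' = -1)
    (hi : i < i') (hj : j < j') :
    ASMContains A p2143 := by
  obtain ⟨hv, hrow, hcol, hprow, hpcol⟩ := hA
  obtain ⟨a, ha, ha1⟩ := exists_left (fun l => A l j) i (fun x => hv x j)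
    (hpcol i j) h1
  obtain ⟨b, hb, hb1⟩ := exists_left (A i) j (hv i) (hprow i j) h1
  obtain ⟨c, hc, hc1⟩ := exists_right (fun l => A l j') i' (fun x => hv x j')
    (fun k => hpcol k j') (hcol j') h2
  obtain ⟨d, hd, hd1⟩ := exists_right (A i') j' (hv i') (fun k => hprow i' k)
    (hrow i') h2
  refine ⟨OrderEmbedding.ofStrictMono _ (strictMono4 a i i' c ha hi hc),
    OrderEmbedding.ofStrictMono _ (strictMono4 b j j' d hb hj hd), ?_⟩
  intro x
  fin_cases x <;>
    simp [p2143, OrderEmbedding.ofStrictMono, ha1, hb1, hc1, hd1]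
end

section
/- In any alternating sign matrix that classically avoids both 2143 and 3412, all of the −1 entries lie in a single row or in a single column. -/
/-- An order embedding of `Fin 4` from four increasing values. -/
def embOfFour {n : ℕ} (a b c d : Fin n) (h1 : a < b) (h2 : b < c) (h3 : c < d) :
    Fin 4 ↪o Fin n :=
  OrderEmbedding.ofStrictMono ![a, b, c, d] (by
    intro i j hij
    fin_cases i <;> fin_cases j <;> simp_all <;>
      first
        | exact h1 | exact h2 | exact h3
        | exact h1.trans h2 | exact h2.trans h3
        | exact (h1.trans h2).trans h3)

lemma sum_pos_exists_one {n : ℕ} (A : Matrix (Fin n) (Fin n) ℤ)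
    (htri : ∀ i j, A i j = -1 ∨ A i j = 0 ∨ A i j = 1)
    (i : Fin n) (s : Finset (Fin n)) (h : 0 < ∑ l ∈ s, A i l) :
    ∃ l ∈ s, A i l = 1 := by
  by_contra hc
  push_neg at hc
  have : ∀ l ∈ s, A i l ≤ 0 := by
    intro l hl
    rcases htri i l with h' | h' | h'
    · omega
    · omega
    · exact absurd h' (hc l hl)
  have := Finset.sum_nonpos this
  omega

lemma Iic_sum_split {n : ℕ} (A : Matrix (Fin n) (Fin n) ℤ) (i q : Fin n) :
    ∑ l ∈ Finset.Iic q, A i l = A i q + ∑ l ∈ Finset.Iio q, A i l := by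
  rw [← Finset.Iio_insert, Finset.sum_insert (by simp)]

lemma Ioi_sum_eq {n : ℕ} (A : Matrix (Fin n) (Fin n) ℤ) (i q : Fin n) :
    ∑ l ∈ Finset.Ioi q, A i l = (∑ l, A i l) - ∑ l ∈ Finset.Iic q, A i l := by
  have : Finset.Ioi q = (Finset.Iic q)ᶜ := by ext x; simp
  rw [this, eq_sub_iff_add_eq, Finset.sum_compl_add_sum]

/-- The partial sum ending at a `-1` entry is `0`. -/
lemma Iic_sum_at_neg {n : ℕ} (A : Matrix (Fin n) (Fin n) ℤ) (hA : IsASM A)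
    {p q : Fin n} (h : A p q = -1) : ∑ l ∈ Finset.Iic q, A p l = 0 := by
  obtain ⟨htri, hrow, hcol, hIr, hIc⟩ := hA
  have hsplit := Iic_sum_split A p q
  have hq0 : q.val ≠ 0 := by
    intro h0
    have : Finset.Iio q = ∅ := by
      ext x; simp only [Finset.mem_Iio, Fin.lt_def, Finset.notMem_empty, iff_false]; omega
    rw [this] at hsplit
    simp [h] at hsplit
    rcases hIr p q with h' | h' <;> omega
  have hIio : Finset.Iio q = Finset.Iic ⟨q.val - 1, by omega⟩ := by
    ext x; simp only [Finset.mem_Iio, Finset.mem_Iic, Fin.lt_def, Fin.le_def]; omega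
  have hprev := hIr p ⟨q.val - 1, by omega⟩
  rw [← hIio] at hprev
  rcases hIr p q with h' | h' <;> rcases hprev with h'' | h'' <;> omega

lemma exists_left_s8 {n : ℕ} (A : Matrix (Fin n) (Fin n) ℤ) (hA : IsASM A)
    {p q : Fin n} (h : A p q = -1) : ∃ l, l < q ∧ A p l = 1 := by
  have h0 := Iic_sum_at_neg A hA h
  have hsplit := Iic_sum_split A p q
  have hpos : 0 < ∑ l ∈ Finset.Iio q, A p l := by omega
  obtain ⟨l, hl, hl1⟩ := sum_pos_exists_one A hA.1 p _ hpos
  exact ⟨l, Finset.mem_Iio.mp hl, hl1⟩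

lemma exists_right_s8 {n : ℕ} (A : Matrix (Fin n) (Fin n) ℤ) (hA : IsASM A)
    {p q : Fin n} (h : A p q = -1) : ∃ l, q < l ∧ A p l = 1 := by
  have h0 := Iic_sum_at_neg A hA h
  have hIoi := Ioi_sum_eq A p q
  rw [hA.2.1 p, h0] at hIoi
  obtain ⟨l, hl, hl1⟩ := sum_pos_exists_one A hA.1 p (Finset.Ioi q) (by omega)
  exact ⟨l, Finset.mem_Ioi.mp hl, hl1⟩

lemma isASM_transpose {n : ℕ} (A : Matrix (Fin n) (Fin n) ℤ) (hA : IsASM A) : IsASM (Matrix.transpose A) := by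
  obtain ⟨htri, hrow, hcol, hIr, hIc⟩ := hA
  exact ⟨fun i j => htri j i, hcol, hrow, fun i j => hIc j i, fun i j => hIr j i⟩

lemma exists_above {n : ℕ} (A : Matrix (Fin n) (Fin n) ℤ) (hA : IsASM A)
    {p q : Fin n} (h : A p q = -1) : ∃ l, l < p ∧ A l q = 1 :=
  exists_left_s8 (Matrix.transpose A) (isASM_transpose A hA) (show Matrix.transpose A q p = -1 from h)

lemma exists_below {n : ℕ} (A : Matrix (Fin n) (Fin n) ℤ) (hA : IsASM A)
    {p q : Fin n} (h : A p q = -1) : ∃ l, p < l ∧ A l q = 1 :=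
  exists_right_s8 (Matrix.transpose A) (isASM_transpose A hA) (show Matrix.transpose A q p = -1 from h)

/-- Two `-1`s in distinct rows and columns are impossible. -/
lemma key_aux {n : ℕ} (A : Matrix (Fin n) (Fin n) ℤ) (hA : IsASM A)
    (h2143 : ASMAvoids A p2143) (h3412 : ASMAvoids A p3412)
    {p q p' q' : Fin n} (h1 : A p q = -1) (h2 : A p' q' = -1)
    (hp : p < p') (hq : q ≠ q') : False := by
  obtain ⟨pU, hpU, hpU1⟩ := exists_above A hA h1
  obtain ⟨pD, hpD, hpD1⟩ := exists_below A hA h2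
  rcases hq.lt_or_gt with hqlt | hqlt
  · -- q < q' : 2143 pattern
    obtain ⟨qL, hqL, hqL1⟩ := exists_left_s8 A hA h1
    obtain ⟨qR, hqR, hqR1⟩ := exists_right_s8 A hA h2
    exact h2143 ⟨embOfFour pU p p' pD hpU hp hpD,
      embOfFour qL q q' qR hqL hqlt hqR, by
        intro a
        fin_cases a <;>
          simp_all [p2143, embOfFour, OrderEmbedding.ofStrictMono]⟩
  · -- q' < q : 3412 pattern
    obtain ⟨qR, hqR, hqR1⟩ := exists_right_s8 A hA h1
    obtain ⟨qL, hqL, hqL1⟩ := exists_left_s8 A hA h2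
    exact h3412 ⟨embOfFour pU p p' pD hpU hp hpD,
      embOfFour qL q' q qR hqL hqlt hqR, by
        intro a
        fin_cases a <;>
          simp_all [p3412, embOfFour, OrderEmbedding.ofStrictMono]⟩

lemma key_s8 {n : ℕ} (A : Matrix (Fin n) (Fin n) ℤ) (hA : IsASM A)
    (h2143 : ASMAvoids A p2143) (h3412 : ASMAvoids A p3412)
    {p q p' q' : Fin n} (h1 : A p q = -1) (h2 : A p' q' = -1)
    (hp : p ≠ p') (hq : q ≠ q') : False := by
  rcases hp.lt_or_gt with h | h
  · exact key_aux A hA h2143 h3412 h1 h2 h hq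
  · exact key_aux A hA h2143 h3412 h2 h1 h hq.symm

theorem statement8 {n : ℕ} (A : Matrix (Fin n) (Fin n) ℤ) (hA : IsASM A)
    (h2143 : ASMAvoids A p2143) (h3412 : ASMAvoids A p3412) :
    (∀ p q p' q' : Fin n, A p q = -1 → A p' q' = -1 → p = p') ∨
    (∀ p q p' q' : Fin n, A p q = -1 → A p' q' = -1 → q = q') := by
  by_cases hrow : ∀ p q p' q' : Fin n, A p q = -1 → A p' q' = -1 → p = p'
  · exact Or.inl hrow
  · push_neg at hrow
    obtain ⟨p, q, p', q', h1, h2, hp⟩ := hrow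
    have hq : q = q' := by
      by_contra hq
      exact key_s8 A hA h2143 h3412 h1 h2 hp hq
    subst hq
    right
    intro a b a' b' ha ha'
    by_contra hb
    -- b ≠ b'; at least one of them differs from q
    rcases eq_or_ne b q with hbq | hbq
    · subst hbq
      -- b' ≠ q = b
      rcases eq_or_ne a' p with ha'p | ha'p
      · subst ha'p
        exact key_s8 A hA h2143 h3412 ha' h2 hp (fun h => hb h.symm)
      · exact key_s8 A hA h2143 h3412 ha' h1 ha'p (fun h => hb h.symm)
    · rcases eq_or_ne a p with hap | hap
      · subst hap
        exact key_s8 A hA h2143 h3412 ha h2 hp hbq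
      · exact key_s8 A hA h2143 h3412 ha h1 hap hbq
end

section
/- Let A be an n×n alternating sign matrix that classically avoids 2143 and 3412 and has exactly three −1 entries, all in row i, with the seven nonzero entries of row i in columns a < b < c < d < e < f < g (entries +1 in columns a, c, e, g and −1 in columns b, d, f). Then the unique 1 entry in column d above row i is in row i−1, and the unique 1 entry in column d below row i is in row i+1. -/
lemma sm4 {n : ℕ} {w x y z : Fin n} (h1 : w < x) (h2 : x < y) (h3 : y < z) :
    StrictMono (![w,x,y,z] : Fin 4 → Fin n) := by
  intro a b hab
  fin_cases a <;> fin_cases b <;> simp_all <;> omega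

lemma mk2143 {n : ℕ} (A : Matrix (Fin n) (Fin n) ℤ) {r0 r1 r2 r3 c0 c1 c2 c3 : Fin n}
    (hr1 : r0<r1) (hr2 : r1<r2) (hr3 : r2<r3) (hc1 : c0<c1) (hc2 : c1<c2) (hc3 : c2<c3)
    (h0 : A r0 c1 = 1) (h1 : A r1 c0 = 1) (h2 : A r2 c3 = 1) (h3 : A r3 c2 = 1) :
    ASMContains A p2143 := by
  refine ⟨OrderEmbedding.ofStrictMono _ (sm4 hr1 hr2 hr3),
    OrderEmbedding.ofStrictMono _ (sm4 hc1 hc2 hc3), ?_⟩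
  intro a
  fin_cases a <;> simp [p2143, OrderEmbedding.ofStrictMono] <;> assumption

lemma mk3412 {n : ℕ} (A : Matrix (Fin n) (Fin n) ℤ) {r0 r1 r2 r3 c0 c1 c2 c3 : Fin n}
    (hr1 : r0<r1) (hr2 : r1<r2) (hr3 : r2<r3) (hc1 : c0<c1) (hc2 : c1<c2) (hc3 : c2<c3)
    (h0 : A r0 c2 = 1) (h1 : A r1 c3 = 1) (h2 : A r2 c0 = 1) (h3 : A r3 c1 = 1) :
    ASMContains A p3412 := by
  refine ⟨OrderEmbedding.ofStrictMono _ (sm4 hr1 hr2 hr3),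
    OrderEmbedding.ofStrictMono _ (sm4 hc1 hc2 hc3), ?_⟩
  intro a
  fin_cases a <;> simp [p3412, OrderEmbedding.ofStrictMono] <;> assumption

lemma colkey {n : ℕ} (A : Matrix (Fin n) (Fin n) ℤ)
    (h01 : ∀ p q, A p q = -1 ∨ A p q = 0 ∨ A p q = 1)
    (hcolsum : ∀ j, ∑ i, A i j = 1)
    (hcp : ∀ i j, ∑ l ∈ Finset.Iic i, A l j = 0 ∨ ∑ l ∈ Finset.Iic i, A l j = 1)
    (i j : Fin n) (hro : ∀ p, p ≠ i → A p j ≠ -1) (hij : A i j = -1) :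
    (∑ l ∈ Finset.Iio i, A l j = 1) ∧ (∑ l ∈ Finset.Ioi i, A l j = 1) ∧
    (∃ s, s < i ∧ A s j = 1) ∧ (∃ r, i < r ∧ A r j = 1) := by
  have hnn : ∀ p, p ≠ i → 0 ≤ A p j := by
    intro p hp
    rcases h01 p j with h | h | h
    · exact absurd h (hro p hp)
    · omega
    · omega
  have hIic : ∑ l ∈ Finset.Iic i, A l j = (∑ l ∈ Finset.Iio i, A l j) + A i j := by
    rw [← Finset.Iio_insert, Finset.sum_insert Finset.notMem_Iio_self, add_comm]
  have hIio_pos : 1 ≤ ∑ l ∈ Finset.Iio i, A l j := by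
    rcases hcp i j with h | h <;> omega
  have habove : ∃ s, s < i ∧ A s j = 1 := by
    by_contra hcon
    push_neg at hcon
    have : ∑ l ∈ Finset.Iio i, A l j ≤ 0 := by
      apply Finset.sum_nonpos
      intro l hl
      rw [Finset.mem_Iio] at hl
      rcases h01 l j with h | h | h
      · omega
      · omega
      · exact absurd h (hcon l hl)
    omega
  obtain ⟨s, hs, hsj⟩ := habove
  have hipos : 0 < (i : ℕ) := lt_of_le_of_lt (Nat.zero_le _) hs
  have hIio_le : ∑ l ∈ Finset.Iio i, A l j ≤ 1 := by
    have heq : Finset.Iio i = Finset.Iic (⟨(i : ℕ) - 1, by omega⟩ : Fin n) := by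
      ext l
      simp only [Finset.mem_Iio, Finset.mem_Iic, Fin.lt_def, Fin.le_def]
      omega
    rw [heq]
    rcases hcp ⟨(i : ℕ) - 1, by omega⟩ j with h | h <;> omega
  have hIio : ∑ l ∈ Finset.Iio i, A l j = 1 := le_antisymm hIio_le hIio_pos
  have hsplit : (∑ l ∈ Finset.Iic i, A l j) + ∑ l ∈ Finset.Ioi i, A l j = 1 := by
    rw [← hcolsum j, ← Finset.sum_union]
    · congr 1
      ext l
      simp [le_or_gt]
    · rw [Finset.disjoint_left]
      intro l hl hl'
      simp at hl hl'
      omega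
  have hIoi : ∑ l ∈ Finset.Ioi i, A l j = 1 := by omega
  refine ⟨hIio, hIoi, ⟨s, hs, hsj⟩, ?_⟩
  by_contra hcon
  push_neg at hcon
  have : ∑ l ∈ Finset.Ioi i, A l j ≤ 0 := by
    apply Finset.sum_nonpos
    intro l hl
    rw [Finset.mem_Ioi] at hl
    rcases h01 l j with h | h | h
    · exact absurd h (hro l (by intro h'; subst h'; exact absurd hl (lt_irrefl _)))
    · omega
    · exact absurd h (hcon l hl)
  omega

theorem statement13 {n : ℕ} (A : Matrix (Fin n) (Fin n) ℤ) (hA : IsASM A)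
    (h2143 : ASMAvoids A p2143) (h3412 : ASMAvoids A p3412)
    (i a b c d e f g : Fin n)
    (hthree : (Finset.univ.filter (fun p : Fin n × Fin n => A p.1 p.2 = -1)).card = 3)
    (hrow : ∀ p q : Fin n, A p q = -1 → p = i)
    (hord : a < b ∧ b < c ∧ c < d ∧ d < e ∧ e < f ∧ f < g)
    (hvals : A i a = 1 ∧ A i b = -1 ∧ A i c = 1 ∧ A i d = -1 ∧ A i e = 1 ∧
      A i f = -1 ∧ A i g = 1)
    (hsupp : ∀ j : Fin n, A i j ≠ 0 →
      j = a ∨ j = b ∨ j = c ∨ j = d ∨ j = e ∨ j = f ∨ j = g) :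
    (∀ p : Fin n, p < i → A p d = 1 → (p : ℕ) = (i : ℕ) - 1) ∧
    (∀ p : Fin n, i < p → A p d = 1 → (p : ℕ) = (i : ℕ) + 1) := by
  obtain ⟨h01, hrowsum, hcolsum, hrp, hcp⟩ := hA
  obtain ⟨hab, hbc, hcd, hde, hef, hfg⟩ := hord
  obtain ⟨hia, hib, hic, hid, hie, hif, hig⟩ := hvals
  have hro : ∀ j, ∀ p : Fin n, p ≠ i → A p j ≠ -1 := fun j p hp h => hp (hrow p j h)
  obtain ⟨hIb, hOb, ⟨sb, hsb, hsb1⟩, ⟨rb, hrb, hrb1⟩⟩ := colkey A h01 hcolsum hcp i b (hro b) hib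
  obtain ⟨hId, hOd, -, -⟩ := colkey A h01 hcolsum hcp i d (hro d) hid
  obtain ⟨hIf, hOf, ⟨sf, hsf, hsf1⟩, ⟨rf, hrf, hrf1⟩⟩ := colkey A h01 hcolsum hcp i f (hro f) hif
  have hnn : ∀ p j, p ≠ i → 0 ≤ A p j := by
    intro p j hp
    rcases h01 p j with h | h | h
    · exact absurd h (hro j p hp)
    · omega
    · omega
  have hrowone : ∀ q : Fin n, q ≠ i → ∃ x, A q x = 1 := by
    intro q hq
    by_contra hcon
    push_neg at hcon
    have : ∑ x, A q x ≤ 0 := by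
      apply Finset.sum_nonpos
      intro x _
      rcases h01 q x with h | h | h
      · exact absurd h (hro x q hq)
      · omega
      · exact absurd h (hcon x)
    rw [hrowsum q] at this
    omega
  have hpairIio : ∀ (j : Fin n) (u v : Fin n), u < v → v < i → A u j = 1 → A v j = 1 →
      2 ≤ ∑ l ∈ Finset.Iio i, A l j := by
    intro j u v huv hvi hu hv
    calc (2 : ℤ) = ∑ l ∈ ({u, v} : Finset (Fin n)), A l j := by
          rw [Finset.sum_pair (ne_of_lt huv)]; omega
      _ ≤ ∑ l ∈ Finset.Iio i, A l j := by
          apply Finset.sum_le_sum_of_subset_of_nonneg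
          · intro l hl
            simp at hl
            rcases hl with h | h <;> subst h <;> simp [lt_trans huv hvi, hvi]
          · intro l hl _
            refine hnn l j fun h => ?_
            rw [h] at hl
            exact absurd (Finset.mem_Iio.1 hl) (lt_irrefl i)
  have hpairIoi : ∀ (j : Fin n) (u v : Fin n), i < u → u < v → A u j = 1 → A v j = 1 →
      2 ≤ ∑ l ∈ Finset.Ioi i, A l j := by
    intro j u v hiu huv hu hv
    calc (2 : ℤ) = ∑ l ∈ ({u, v} : Finset (Fin n)), A l j := by
          rw [Finset.sum_pair (ne_of_lt huv)]; omega
      _ ≤ ∑ l ∈ Finset.Ioi i, A l j := by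
          apply Finset.sum_le_sum_of_subset_of_nonneg
          · intro l hl
            simp at hl
            rcases hl with h | h <;> subst h <;> simp [hiu, lt_trans hiu huv]
          · intro l hl _
            refine hnn l j fun h => ?_
            rw [h] at hl
            exact absurd (Finset.mem_Ioi.1 hl) (lt_irrefl i)
  constructor
  · intro p hpi hpd
    by_contra hne
    have hlt : (p : ℕ) < (i : ℕ) := hpi
    have hq : (p : ℕ) + 1 < (i : ℕ) := by omega
    set q : Fin n := ⟨(p : ℕ) + 1, by omega⟩ with hqdef
    have hpq : p < q := by simp [Fin.lt_def, hqdef]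
    have hqi : q < i := by simpa [Fin.lt_def, hqdef] using hq
    obtain ⟨x, hx⟩ := hrowone q (ne_of_lt hqi)
    have hxd : x ≠ d := by
      intro h
      subst h
      have := hpairIio x p q hpq hqi hpd hx
      omega
    rcases lt_or_gt_of_ne hxd with hxlt | hxgt
    · -- 2143 : rows p q i rf, cols x d f g
      exact h2143 (mk2143 A hpq hqi hrf hxlt (lt_trans hde hef) hfg hpd hx hig hrf1)
    · -- 3412 : rows p q i rb, cols a b d x
      exact h3412 (mk3412 A hpq hqi hrb hab (lt_trans hbc hcd) hxgt hpd hx hia hrb1)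
  · intro p hip hpd
    by_contra hne
    have hlt : (i : ℕ) < (p : ℕ) := hip
    have hq : (i : ℕ) + 1 < (p : ℕ) := by omega
    set q : Fin n := ⟨(i : ℕ) + 1, by omega⟩ with hqdef
    have hiq : i < q := by simp [Fin.lt_def, hqdef]
    have hqp : q < p := by simpa [Fin.lt_def, hqdef] using hq
    obtain ⟨x, hx⟩ := hrowone q (ne_of_gt hiq)
    have hxd : x ≠ d := by
      intro h
      subst h
      have := hpairIoi x q p hiq hqp hx hpd
      omega
    rcases lt_or_gt_of_ne hxd with hxlt | hxgt
    · -- 3412 : rows sf i q p, cols x d f g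
      exact h3412 (mk3412 A hsf hiq hqp hxlt (lt_trans hde hef) hfg hsf1 hig hx hpd)
    · -- 2143 : rows sb i q p, cols a b d x
      exact h2143 (mk2143 A hsb hiq hqp hab (lt_trans hbc hcd) hxgt hsb1 hia hx hpd)
end

section
/- Let A be an n×n alternating sign matrix that classically avoids 2143 and 3412 with exactly three −1 entries, all in row i. Then the seven nonzero entries of row i occupy seven consecutive columns. -/
namespace St14
variable {n : ℕ}

def emb4 (a b c d : Fin n) (h1 : a < b) (h2 : b < c) (h3 : c < d) : Fin 4 ↪o Fin n :=
  OrderEmbedding.ofStrictMono ![a,b,c,d] (by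
    have t1 := h1.trans h2
    have t2 := h2.trans h3
    have t3 := t1.trans h3
    intro x y hxy
    fin_cases x <;> fin_cases y <;> simp_all)

lemma contains2143 (A : Matrix (Fin n) (Fin n) ℤ)
    {w1 w2 w3 w4 d1 d2 d3 d4 : Fin n}
    (hw1 : w1 < w2) (hw2 : w2 < w3) (hw3 : w3 < w4)
    (hd1 : d1 < d2) (hd2 : d2 < d3) (hd3 : d3 < d4)
    (e1 : A w1 d2 = 1) (e2 : A w2 d1 = 1) (e3 : A w3 d4 = 1) (e4 : A w4 d3 = 1) :
    ASMContains A p2143 := by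
  refine ⟨emb4 w1 w2 w3 w4 hw1 hw2 hw3, emb4 d1 d2 d3 d4 hd1 hd2 hd3, ?_⟩
  intro a
  fin_cases a <;>
    simp [p2143, emb4, OrderEmbedding.coe_ofStrictMono] <;> assumption

lemma contains3412 (A : Matrix (Fin n) (Fin n) ℤ)
    {w1 w2 w3 w4 d1 d2 d3 d4 : Fin n}
    (hw1 : w1 < w2) (hw2 : w2 < w3) (hw3 : w3 < w4)
    (hd1 : d1 < d2) (hd2 : d2 < d3) (hd3 : d3 < d4)
    (e1 : A w1 d3 = 1) (e2 : A w2 d4 = 1) (e3 : A w3 d1 = 1) (e4 : A w4 d2 = 1) :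
    ASMContains A p3412 := by
  refine ⟨emb4 w1 w2 w3 w4 hw1 hw2 hw3, emb4 d1 d2 d3 d4 hd1 hd2 hd3, ?_⟩
  intro a
  fin_cases a <;>
    simp [p3412, emb4, OrderEmbedding.coe_ofStrictMono] <;> assumption

lemma sum_split' (f : Fin n → ℤ) (i : Fin n) :
    ∑ x, f x = (∑ x ∈ Finset.Iic i, f x) + ∑ x ∈ Finset.Ioi i, f x := by
  rw [← Finset.sum_union]
  · congr 1
    ext x
    simp [le_or_gt]
  · rw [Finset.disjoint_left]
    intro a h1 h2
    simp only [Finset.mem_Iic] at h1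
    simp only [Finset.mem_Ioi] at h2
    exact absurd h2 (not_lt.mpr h1)

lemma sum_Iic_eq' (f : Fin n → ℤ) (i : Fin n) :
    ∑ x ∈ Finset.Iic i, f x = (∑ x ∈ Finset.Iio i, f x) + f i := by
  rw [← Finset.Iio_insert, Finset.sum_insert (by simp)]
  ring

lemma exists_one {s : Finset (Fin n)} {f : Fin n → ℤ}
    (h01 : ∀ x ∈ s, f x = 0 ∨ f x = 1) (hs : ∑ x ∈ s, f x ≠ 0) :
    ∃ a ∈ s, f a = 1 := by
  obtain ⟨a, ha, hfa⟩ := Finset.exists_ne_zero_of_sum_ne_zero hs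
  exact ⟨a, ha, (h01 a ha).resolve_left hfa⟩

lemma col_ones {A : Matrix (Fin n) (Fin n) ℤ} (hA : IsASM A) {i : Fin n}
    (h01 : ∀ p q, p ≠ i → A p q = 0 ∨ A p q = 1) {c : Fin n} (hc : A i c = -1) :
    (∃ r, r < i ∧ A r c = 1) ∧ (∃ q, i < q ∧ A q c = 1) := by
  obtain ⟨-, -, colsum, -, colpar⟩ := hA
  have h01' : ∀ x ∈ Finset.Iio i, A x c = 0 ∨ A x c = 1 := by
    intro x hx
    exact h01 x c (ne_of_lt (Finset.mem_Iio.mp hx))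
  have hIic := sum_Iic_eq' (fun l => A l c) i
  rw [hc] at hIic
  have hpar := colpar i c
  have hs1v : (∑ x ∈ Finset.Iio i, A x c) = 1 ∨ (∑ x ∈ Finset.Iio i, A x c) = 2 := by
    rcases hpar with h | h <;> rw [hIic] at h <;> omega
  have hs1one : (∑ x ∈ Finset.Iio i, A x c) = 1 := by
    rcases hs1v with h | h
    · exact h
    exfalso
    obtain ⟨a, ha, hfa⟩ := exists_one h01' (by rw [h]; norm_num)
    have hsum2 : ∑ x ∈ Finset.Iio i \ {a}, A x c = 1 := by
      have h5 : (∑ x ∈ Finset.Iio i \ {a}, A x c) + ∑ x ∈ ({a} : Finset (Fin n)), A x c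
          = ∑ x ∈ Finset.Iio i, A x c := Finset.sum_sdiff (Finset.singleton_subset_iff.mpr ha)
      rw [Finset.sum_singleton, hfa, h] at h5
      omega
    obtain ⟨b, hb, hfb⟩ := exists_one
      (fun x hx => h01' x (Finset.sdiff_subset hx)) (by rw [hsum2]; norm_num)
    have hab : b ≠ a := by
      intro e; rw [e] at hb; simp at hb
    have hbi : b ∈ Finset.Iio i := Finset.sdiff_subset hb
    have hmi : max a b < i := max_lt (Finset.mem_Iio.mp ha) (Finset.mem_Iio.mp hbi)
    set m := max a b with hm
    have hsub : ({a, b} : Finset (Fin n)) ⊆ Finset.Iic m := by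
      intro x hx
      simp only [Finset.mem_insert, Finset.mem_singleton] at hx
      rcases hx with h | h <;> subst h <;>
        exact Finset.mem_Iic.mpr (by simp [hm, le_max_left, le_max_right])
    have h2le : (2 : ℤ) ≤ ∑ x ∈ Finset.Iic m, A x c := by
      have hpair : ∑ x ∈ ({a, b} : Finset (Fin n)), A x c = 2 := by
        rw [Finset.sum_pair (Ne.symm hab), hfa, hfb]; norm_num
      rw [← hpair]
      apply Finset.sum_le_sum_of_subset_of_nonneg hsub
      intro x hx _
      have : A x c = 0 ∨ A x c = 1 := h01 x c (ne_of_lt ((Finset.mem_Iic.mp hx).trans_lt hmi))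
      omega
    rcases colpar m c with h' | h' <;> omega
  have hIic0 : ∑ x ∈ Finset.Iic i, A x c = 0 := by omega
  have hIoi : ∑ x ∈ Finset.Ioi i, A x c = 1 := by
    have := sum_split' (fun l => A l c) i
    rw [colsum c, hIic0] at this
    omega
  constructor
  · obtain ⟨r, hr, hr1⟩ := exists_one h01' (by rw [hs1one]; norm_num)
    exact ⟨r, Finset.mem_Iio.mp hr, hr1⟩
  · obtain ⟨q, hq, hq1⟩ := exists_one
      (fun x hx => h01 x c (ne_of_gt (Finset.mem_Ioi.mp hx))) (by rw [hIoi]; norm_num)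
    exact ⟨q, Finset.mem_Ioi.mp hq, hq1⟩

lemma col_one0 {A : Matrix (Fin n) (Fin n) ℤ} (hA : IsASM A) {i : Fin n}
    (h01 : ∀ p q, p ≠ i → A p q = 0 ∨ A p q = 1) {c : Fin n} (hc : A i c = 0) :
    ∃ p, p ≠ i ∧ A p c = 1 := by
  obtain ⟨p, -, hp⟩ := Finset.exists_ne_zero_of_sum_ne_zero
    (s := Finset.univ) (f := fun l => A l c) (by rw [hA.2.2.1 c]; norm_num)
  have hpi : p ≠ i := fun e => hp (by rw [e, hc])
  exact ⟨p, hpi, (h01 p c hpi).resolve_left hp⟩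

lemma row_min_one {A : Matrix (Fin n) (Fin n) ℤ} (hA : IsASM A) (i : Fin n) {c1 : Fin n}
    (hmem : A i c1 ≠ 0) (hmin : ∀ l, l < c1 → A i l = 0) : A i c1 = 1 := by
  have h1 := sum_Iic_eq' (fun l => A i l) c1
  have h2 : ∑ x ∈ Finset.Iio c1, A i x = 0 :=
    Finset.sum_eq_zero (fun x hx => hmin x (Finset.mem_Iio.mp hx))
  rcases hA.2.2.2.1 i c1 with h | h <;> rw [h1, h2] at h <;> omega

lemma row_max_one {A : Matrix (Fin n) (Fin n) ℤ} (hA : IsASM A) (i : Fin n) {c7 : Fin n}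
    (hmem : A i c7 ≠ 0) (hmax : ∀ l, c7 < l → A i l = 0) : A i c7 = 1 := by
  have h1 : ∑ x ∈ Finset.Iic c7, A i x = 1 := by
    have h2 : ∑ x ∈ Finset.Ioi c7, A i x = 0 :=
      Finset.sum_eq_zero (fun x hx => hmax x (Finset.mem_Ioi.mp hx))
    have h3 := sum_split' (fun l => A i l) c7
    rw [hA.2.1 i, h2] at h3
    omega
  rw [sum_Iic_eq' (fun l => A i l) c7] at h1
  have hIio : ∑ x ∈ Finset.Iio c7, A i x = 0 ∨ ∑ x ∈ Finset.Iio c7, A i x = 1 := by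
    by_cases h0 : (c7 : ℕ) = 0
    · left
      apply Finset.sum_eq_zero
      intro x hx
      exact absurd (Finset.mem_Iio.mp hx) (by simp [Fin.lt_def, h0])
    · have hlt : (c7 : ℕ) - 1 < n := by omega
      have he : Finset.Iio c7 = Finset.Iic ⟨(c7 : ℕ) - 1, hlt⟩ := by
        ext x
        simp only [Finset.mem_Iio, Finset.mem_Iic, Fin.lt_def, Fin.le_def]
        omega
      rw [he]
      exact hA.2.2.2.1 i ⟨(c7 : ℕ) - 1, hlt⟩
  rcases hIio with h | h <;> rw [h] at h1 <;> omega

lemma sort3 {P : Fin n → Prop} {a b c : Fin n} (hab : a ≠ b) (hac : a ≠ c) (hbc : b ≠ c)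
    (ha : P a) (hb : P b) (hc : P c) :
    ∃ x y z, x < y ∧ y < z ∧ P x ∧ P y ∧ P z := by
  rcases hab.lt_or_gt with h1 | h1 <;> rcases hac.lt_or_gt with h2 | h2 <;>
    rcases hbc.lt_or_gt with h3 | h3
  · exact ⟨a, b, c, h1, h3, ha, hb, hc⟩
  · exact ⟨a, c, b, h2, h3, ha, hc, hb⟩
  · exact absurd ((h2.trans h1).trans h3) (lt_irrefl c)
  · exact ⟨c, a, b, h2, h1, hc, ha, hb⟩
  · exact ⟨b, a, c, h1, h2, hb, ha, hc⟩
  · exact absurd ((h2.trans h3).trans h1) (lt_irrefl a)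
  · exact ⟨b, c, a, h3, h2, hb, hc, ha⟩
  · exact ⟨c, b, a, h3, h1, hc, hb, ha⟩

end St14

theorem statement14 {n : ℕ} (A : Matrix (Fin n) (Fin n) ℤ) (hA : IsASM A)
    (h2143 : ASMAvoids A p2143) (h3412 : ASMAvoids A p3412)
    (i : Fin n)
    (hthree : (Finset.univ.filter (fun p : Fin n × Fin n => A p.1 p.2 = -1)).card = 3)
    (hrow : ∀ p q : Fin n, A p q = -1 → p = i) :
    ∀ j1 j2 j3 : Fin n, j1 < j2 → j2 < j3 → A i j1 ≠ 0 → A i j3 ≠ 0 → A i j2 ≠ 0 := by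
  intro j1 j2 j3 h12 h23 hj1 hj3 h0
  have h01 : ∀ p q, p ≠ i → A p q = 0 ∨ A p q = 1 := by
    intro p q hp
    rcases hA.1 p q with h | h | h
    · exact absurd (hrow p q h) hp
    · exact Or.inl h
    · exact Or.inr h
  have huniq : ∀ p a b, p ≠ i → A p a = 1 → A p b = 1 → a = b := by
    intro p a b hp ha hb
    by_contra hne
    have hpair : ∑ x ∈ ({a, b} : Finset (Fin n)), A p x = 2 := by
      rw [Finset.sum_pair hne, ha, hb]; norm_num
    have hle : (2 : ℤ) ≤ ∑ x, A p x := by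
      rw [← hpair]
      apply Finset.sum_le_sum_of_subset_of_nonneg (Finset.subset_univ _)
      intro x _ _
      rcases h01 p x hp with h | h <;> omega
    rw [hA.2.1 p] at hle
    omega
  obtain ⟨c2, c4, c6, h24, h46, m2, m4, m6⟩ :
      ∃ c2 c4 c6 : Fin n, c2 < c4 ∧ c4 < c6 ∧ A i c2 = -1 ∧ A i c4 = -1 ∧ A i c6 = -1 := by
    obtain ⟨x, y, z, hxy, hxz, hyz, hset⟩ := Finset.card_eq_three.mp hthree
    have hmem : ∀ w : Fin n × Fin n, w ∈ ({x, y, z} : Finset _) → A w.1 w.2 = -1 := by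
      intro w hw
      have hw2 : w ∈ Finset.univ.filter (fun p : Fin n × Fin n => A p.1 p.2 = -1) := by
        rw [hset]; exact hw
      exact (Finset.mem_filter.mp hw2).2
    have hx := hmem x (by simp)
    have hy := hmem y (by simp)
    have hz := hmem z (by simp)
    have hx1 : x.1 = i := hrow _ _ hx
    have hy1 : y.1 = i := hrow _ _ hy
    have hz1 : z.1 = i := hrow _ _ hz
    have hx' : A i x.2 = -1 := by rw [← hx1]; exact hx
    have hy' : A i y.2 = -1 := by rw [← hy1]; exact hy
    have hz' : A i z.2 = -1 := by rw [← hz1]; exact hz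
    have d1 : x.2 ≠ y.2 := fun e => hxy (Prod.ext (hx1.trans hy1.symm) e)
    have d2 : x.2 ≠ z.2 := fun e => hxz (Prod.ext (hx1.trans hz1.symm) e)
    have d3 : y.2 ≠ z.2 := fun e => hyz (Prod.ext (hy1.trans hz1.symm) e)
    exact St14.sort3 d1 d2 d3 hx' hy' hz'
  -- extreme nonzero columns of row i
  set s : Finset (Fin n) := Finset.univ.filter (fun j => A i j ≠ 0) with hsdef
  have hj1s : j1 ∈ s := by simp [hsdef, hj1]
  have hj3s : j3 ∈ s := by simp [hsdef, hj3]
  have hsne : s.Nonempty := ⟨j1, hj1s⟩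
  set c1 := s.min' hsne with hc1def
  set c7 := s.max' hsne with hc7def
  have hc1ne : A i c1 ≠ 0 := (Finset.mem_filter.mp (s.min'_mem hsne)).2
  have hc7ne : A i c7 ≠ 0 := (Finset.mem_filter.mp (s.max'_mem hsne)).2
  have ec1 : A i c1 = 1 := by
    apply St14.row_min_one hA i hc1ne
    intro l hl
    by_contra hne
    exact absurd (s.min'_le l (by simp [hsdef, hne])) (not_le.mpr hl)
  have ec7 : A i c7 = 1 := by
    apply St14.row_max_one hA i hc7ne
    intro l hl
    by_contra hne
    exact absurd (s.le_max' l (by simp [hsdef, hne])) (not_le.mpr hl)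
  have hc1j2 : c1 < j2 := lt_of_le_of_lt (s.min'_le j1 hj1s) h12
  have hj2c7 : j2 < c7 := lt_of_lt_of_le h23 (s.le_max' j3 hj3s)
  have hc12 : c1 < c2 := by
    apply lt_of_le_of_ne (s.min'_le c2 (by simp [hsdef, m2]))
    intro e
    rw [← e, ec1] at m2
    norm_num at m2
  have hc67 : c6 < c7 := by
    apply lt_of_le_of_ne (s.le_max' c6 (by simp [hsdef, m6]))
    intro e
    rw [e, ec7] at m6
    norm_num at m6
  -- ones above and below in the -1 columns, and in column j2
  obtain ⟨⟨r2, hr2i, er2⟩, ⟨q2, hq2i, eq2⟩⟩ := St14.col_ones hA h01 m2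
  obtain ⟨⟨r4, hr4i, er4⟩, ⟨q4, hq4i, eq4⟩⟩ := St14.col_ones hA h01 m4
  obtain ⟨⟨r6, hr6i, er6⟩, ⟨q6, hq6i, eq6⟩⟩ := St14.col_ones hA h01 m6
  obtain ⟨p, hpi, ep⟩ := St14.col_one0 hA h01 h0
  -- ordering facts forced by avoidance
  have hr24 : r2 < r4 := by
    rcases lt_trichotomy r2 r4 with h | h | h
    · exact h
    · exact absurd (huniq r2 c2 c4 (ne_of_lt hr2i) er2 (by rw [h]; exact er4))
        (ne_of_lt h24)
    · exact absurd (St14.contains2143 A h hr2i hq6i h24 h46 hc67 er4 er2 ec7 eq6) h2143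
  have hr64 : r6 < r4 := by
    rcases lt_trichotomy r6 r4 with h | h | h
    · exact h
    · exact absurd (huniq r6 c6 c4 (ne_of_lt hr6i) er6 (by rw [h]; exact er4))
        (ne_of_gt h46)
    · exact absurd (St14.contains3412 A h hr6i hq2i hc12 h24 h46 er4 er6 ec1 eq2) h3412
  have hq42 : q4 < q2 := by
    rcases lt_trichotomy q4 q2 with h | h | h
    · exact h
    · exact absurd (huniq q4 c4 c2 (ne_of_gt hq4i) eq4 (by rw [h]; exact eq2))
        (ne_of_gt h24)
    · exact absurd (St14.contains3412 A hr6i hq2i h h24 h46 hc67 er6 ec7 eq2 eq4) h3412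
  have hq46 : q4 < q6 := by
    rcases lt_trichotomy q4 q6 with h | h | h
    · exact h
    · exact absurd (huniq q4 c4 c6 (ne_of_gt hq4i) eq4 (by rw [h]; exact eq6))
        (ne_of_lt h46)
    · exact absurd (St14.contains2143 A hr2i hq6i h hc12 h24 h46 er2 ec1 eq6 eq4) h2143
  -- j2 differs from the -1 columns
  have hj2c2 : j2 ≠ c2 := fun e => by rw [e, m2] at h0; norm_num at h0
  have hj2c4 : j2 ≠ c4 := fun e => by rw [e, m4] at h0; norm_num at h0
  have hj2c6 : j2 ≠ c6 := fun e => by rw [e, m6] at h0; norm_num at h0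
  have hpr4 : p ≠ r4 := fun e => hj2c4 (huniq p j2 c4 hpi ep (by rw [e]; exact er4))
  have hpq4 : p ≠ q4 := fun e => hj2c4 (huniq p j2 c4 hpi ep (by rw [e]; exact eq4))
  rcases hpi.lt_or_gt with hpil | hpil
  · -- p above row i
    rcases hj2c2.lt_or_gt with hA2 | hA2
    · exact h2143 (St14.contains2143 A hpil hq4i hq42 hc1j2 hA2 h24 ep ec1 eq4 eq2)
    · rcases hj2c4.lt_or_gt with hA4 | hA4
      · rcases hpr4.lt_or_gt with hpr | hpr
        · exact h3412 (St14.contains3412 A hpr hr4i hq2i hc12 hA2 hA4 ep er4 ec1 eq2)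
        · exact h2143 (St14.contains2143 A hpr hpil hq6i hA4 h46 hc67 er4 ep ec7 eq6)
      · rcases hj2c6.lt_or_gt with hA6 | hA6
        · rcases hpr4.lt_or_gt with hpr | hpr
          · exact h2143 (St14.contains2143 A hpr hr4i hq6i hA4 hA6 hc67 ep er4 ec7 eq6)
          · exact h3412 (St14.contains3412 A hpr hpil hq2i hc12 h24 hA4 er4 ep ec1 eq2)
        · exact h3412 (St14.contains3412 A hpil hq4i hq46 h46 hA6 hj2c7 ep ec7 eq4 eq6)
  · -- p below row i
    rcases hj2c2.lt_or_gt with hA2 | hA2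
    · exact h3412 (St14.contains3412 A hr24 hr4i hpil hc1j2 hA2 h24 er2 er4 ec1 ep)
    · rcases hj2c4.lt_or_gt with hA4 | hA4
      · rcases hpq4.lt_or_gt with hpq | hpq
        · exact h3412 (St14.contains3412 A hr6i hpil hpq hA4 h46 hc67 er6 ec7 ep eq4)
        · exact h2143 (St14.contains2143 A hr2i hq4i hpq hc12 hA2 hA4 er2 ec1 eq4 ep)
      · rcases hj2c6.lt_or_gt with hA6 | hA6
        · rcases hpq4.lt_or_gt with hpq | hpq
          · exact h2143 (St14.contains2143 A hr2i hpil hpq hc12 h24 hA4 er2 ec1 ep eq4)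
          · exact h3412 (St14.contains3412 A hr6i hq4i hpq hA4 hA6 hc67 er6 ec7 eq4 ep)
        · exact h2143 (St14.contains2143 A hr64 hr4i hpil h46 hA6 hj2c7 er6 er4 ec7 ep)
end

section
/- The number of n×n alternating sign matrices with at most one entry equal to −1 equals n!·C(n,3)/6 + n!. -/
open Finset

lemma sum_Iic_unit {n : ℕ} (a j : Fin n) :
    ∑ l ∈ Finset.Iic j, (if l = a then (1:ℤ) else 0) = if a ≤ j then 1 else 0 := by
  simp [Finset.sum_ite_eq', Finset.mem_Iic]

abbrev Tri (n : ℕ) := {t : Fin n × Fin n × Fin n // t.1 < t.2.1 ∧ t.2.1 < t.2.2}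

namespace Tri
variable {n : ℕ} (t : Tri n)
lemma ne12 : t.1.1 ≠ t.1.2.1 := ne_of_lt t.2.1
lemma ne13 : t.1.1 ≠ t.1.2.2 := ne_of_lt (t.2.1.trans t.2.2)
lemma ne23 : t.1.2.1 ≠ t.1.2.2 := ne_of_lt t.2.2
end Tri

abbrev Cpl {n : ℕ} (t : Tri n) := {x : Fin n // ¬(x = t.1.1 ∨ x = t.1.2.1 ∨ x = t.1.2.2)}

namespace Cpl
variable {n : ℕ} {t : Tri n} (x : Cpl t)
lemma ne1 : (x : Fin n) ≠ t.1.1 := fun h => x.2 (Or.inl h)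
lemma ne2 : (x : Fin n) ≠ t.1.2.1 := fun h => x.2 (Or.inr (Or.inl h))
lemma ne3 : (x : Fin n) ≠ t.1.2.2 := fun h => x.2 (Or.inr (Or.inr h))
end Cpl

def gfun {n : ℕ} (r c : Tri n) (σ : Cpl r ≃ Cpl c) : Fin n → Fin n := fun i =>
  if h : ¬(i = r.1.1 ∨ i = r.1.2.1 ∨ i = r.1.2.2) then (σ ⟨i, h⟩ : Fin n) else c.1.2.1

def mk1 {n : ℕ} (r c : Tri n) (σ : Cpl r ≃ Cpl c) : Matrix (Fin n) (Fin n) ℤ := fun i j =>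
  if i = r.1.2.1 then
    (if j = c.1.1 then 1 else 0) + (if j = c.1.2.2 then 1 else 0) - (if j = c.1.2.1 then 1 else 0)
  else if j = gfun r c σ i then 1 else 0

section mk1
variable {n : ℕ} (r c : Tri n) (σ : Cpl r ≃ Cpl c)

lemma gfun_cpl (i : Fin n) (h : ¬(i = r.1.1 ∨ i = r.1.2.1 ∨ i = r.1.2.2)) :
    gfun r c σ i = (σ ⟨i, h⟩ : Fin n) := dif_pos h

lemma gfun_left : gfun r c σ r.1.1 = c.1.2.1 := dif_neg (by simp)

lemma gfun_right : gfun r c σ r.1.2.2 = c.1.2.1 := dif_neg (by simp)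

lemma mk1_col_cj (i : Fin n) :
    mk1 r c σ i c.1.2.1 =
      (if i = r.1.1 then 1 else 0) + (if i = r.1.2.2 then 1 else 0) - (if i = r.1.2.1 then 1 else 0) := by
  by_cases hi : i = r.1.2.1
  · subst hi
    simp [mk1, c.ne12, (c.ne12).symm, c.ne23, (c.ne23).symm, (r.ne12).symm, r.ne23]
  · rw [show mk1 r c σ i c.1.2.1 = if c.1.2.1 = gfun r c σ i then 1 else 0 from if_neg hi]
    by_cases h : ¬(i = r.1.1 ∨ i = r.1.2.1 ∨ i = r.1.2.2)
    · rw [gfun_cpl r c σ i h, if_neg (Ne.symm (Cpl.ne2 _))]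
      push_neg at h
      simp [h.1, h.2.2, hi]
    · push_neg at h
      rcases h with h' | h' | h'
      · subst h'
        simp [gfun_left, r.ne13, hi]
      · exact absurd h' hi
      · subst h'
        simp [gfun_right, (r.ne13).symm, hi]

lemma mk1_col_ca (i : Fin n) :
    mk1 r c σ i c.1.1 = if i = r.1.2.1 then 1 else 0 := by
  by_cases hi : i = r.1.2.1
  · subst hi
    simp [mk1, c.ne12, c.ne13]
  · rw [show mk1 r c σ i c.1.1 = if c.1.1 = gfun r c σ i then 1 else 0 from if_neg hi,
      if_neg, if_neg hi]
    by_cases h : ¬(i = r.1.1 ∨ i = r.1.2.1 ∨ i = r.1.2.2)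
    · rw [gfun_cpl r c σ i h]
      exact Ne.symm (Cpl.ne1 _)
    · push_neg at h
      rcases h with h' | h' | h'
      · subst h'; rw [gfun_left]; exact c.ne12
      · exact absurd h' hi
      · subst h'; rw [gfun_right]; exact c.ne12

lemma mk1_col_cb (i : Fin n) :
    mk1 r c σ i c.1.2.2 = if i = r.1.2.1 then 1 else 0 := by
  by_cases hi : i = r.1.2.1
  · subst hi
    simp [mk1, (c.ne13).symm, c.ne23.symm]
  · rw [show mk1 r c σ i c.1.2.2 = if c.1.2.2 = gfun r c σ i then 1 else 0 from if_neg hi,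
      if_neg, if_neg hi]
    by_cases h : ¬(i = r.1.1 ∨ i = r.1.2.1 ∨ i = r.1.2.2)
    · rw [gfun_cpl r c σ i h]
      exact Ne.symm (Cpl.ne3 _)
    · push_neg at h
      rcases h with h' | h' | h'
      · subst h'; rw [gfun_left]; exact (c.ne23).symm
      · exact absurd h' hi
      · subst h'; rw [gfun_right]; exact (c.ne23).symm

lemma mk1_col_other (j : Fin n) (hj : ¬(j = c.1.1 ∨ j = c.1.2.1 ∨ j = c.1.2.2)) (i : Fin n) :
    mk1 r c σ i j = if i = (σ.symm ⟨j, hj⟩ : Fin n) then 1 else 0 := by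
  by_cases hi : i = r.1.2.1
  · subst hi
    have hj' := hj
    push_neg at hj'
    rw [show mk1 r c σ r.1.2.1 j = _ from if_pos rfl]
    have hne : (σ.symm ⟨j, hj⟩ : Fin n) ≠ r.1.2.1 := Cpl.ne2 _
    simp [hj'.1, hj'.2.1, hj'.2.2, Ne.symm hne]
  · rw [show mk1 r c σ i j = if j = gfun r c σ i then 1 else 0 from if_neg hi]
    by_cases h : ¬(i = r.1.1 ∨ i = r.1.2.1 ∨ i = r.1.2.2)
    · rw [gfun_cpl r c σ i h]
      have key : (j = (σ ⟨i, h⟩ : Fin n)) ↔ (i = (σ.symm ⟨j, hj⟩ : Fin n)) := by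
        constructor
        · intro hh
          have : (⟨j, hj⟩ : Cpl c) = σ ⟨i, h⟩ := Subtype.ext hh
          rw [this, Equiv.symm_apply_apply]
        · intro hh
          have : (⟨i, h⟩ : Cpl r) = σ.symm ⟨j, hj⟩ := Subtype.ext hh
          rw [this, Equiv.apply_symm_apply]
      by_cases hk : j = (σ ⟨i, h⟩ : Fin n)
      · rw [if_pos hk, if_pos (key.1 hk)]
      · rw [if_neg hk, if_neg (fun hh => hk (key.2 hh))]
    · push_neg at h
      have hgf : gfun r c σ i = c.1.2.1 := by
        rcases h with h' | h' | h'
        · subst h'; exact gfun_left r c σ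
        · exact absurd h' hi
        · subst h'; exact gfun_right r c σ
      rw [hgf, if_neg (by push_neg at hj; exact hj.2.1)]
      rw [if_neg]
      intro hh
      have := (σ.symm ⟨j, hj⟩).2
      rw [← hh] at this
      push_neg at this
      rcases h with h' | h' | h'
      · exact this.1 h'
      · exact absurd h' hi
      · exact this.2.2 h'

end mk1

section helpers
variable {n : ℕ}

lemma three_entries (a b j₀ : Fin n) (hab : a ≠ b) (j : Fin n) :
    (if j = a then (1:ℤ) else 0) + (if j = b then 1 else 0) - (if j = j₀ then 1 else 0) = -1 ∨
    (if j = a then (1:ℤ) else 0) + (if j = b then 1 else 0) - (if j = j₀ then 1 else 0) = 0 ∨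
    (if j = a then (1:ℤ) else 0) + (if j = b then 1 else 0) - (if j = j₀ then 1 else 0) = 1 := by
  by_cases h1 : j = a <;> by_cases h2 : j = b <;> by_cases h3 : j = j₀ <;> simp_all

lemma three_neg_iff (a b j₀ : Fin n) (ha : a ≠ j₀) (hb : b ≠ j₀) (j : Fin n) :
    (if j = a then (1:ℤ) else 0) + (if j = b then 1 else 0) - (if j = j₀ then 1 else 0) = -1 ↔ j = j₀ := by
  by_cases h1 : j = a <;> by_cases h2 : j = b <;> by_cases h3 : j = j₀ <;> simp_all

lemma three_sum (a b j₀ : Fin n) (h1 : a ≠ b) :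
    ∑ j : Fin n, ((if j = a then (1:ℤ) else 0) + (if j = b then 1 else 0) - (if j = j₀ then 1 else 0)) = 1 := by
  rw [Finset.sum_sub_distrib, Finset.sum_add_distrib]
  simp

lemma three_partial (a b j₀ : Fin n) (ha : a < j₀) (hb : j₀ < b) (j : Fin n) :
    (∑ l ∈ Finset.Iic j, ((if l = a then (1:ℤ) else 0) + (if l = b then 1 else 0) - (if l = j₀ then 1 else 0)) = 0) ∨
    (∑ l ∈ Finset.Iic j, ((if l = a then (1:ℤ) else 0) + (if l = b then 1 else 0) - (if l = j₀ then 1 else 0)) = 1) := by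
  rw [Finset.sum_sub_distrib, Finset.sum_add_distrib, sum_Iic_unit, sum_Iic_unit, sum_Iic_unit]
  simp only [Fin.lt_def] at ha hb
  split_ifs with h1 h2 h3 <;> simp only [Fin.le_def, not_le] at * <;> omega

lemma unit_partial (a j : Fin n) :
    (∑ l ∈ Finset.Iic j, (if l = a then (1:ℤ) else 0) = 0) ∨
    (∑ l ∈ Finset.Iic j, (if l = a then (1:ℤ) else 0) = 1) := by
  rw [sum_Iic_unit]; split_ifs <;> simp

lemma unit_sum (a : Fin n) : ∑ j : Fin n, (if j = a then (1:ℤ) else 0) = 1 := by simp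

end helpers

section mk1b
variable {n : ℕ} (r c : Tri n) (σ : Cpl r ≃ Cpl c)

lemma mk1_row (i : Fin n) (hi : i ≠ r.1.2.1) (j : Fin n) :
    mk1 r c σ i j = if j = gfun r c σ i then 1 else 0 := if_neg hi

lemma mk1_row_ri (j : Fin n) :
    mk1 r c σ r.1.2.1 j =
      (if j = c.1.1 then 1 else 0) + (if j = c.1.2.2 then 1 else 0) - (if j = c.1.2.1 then 1 else 0) :=
  if_pos rfl

lemma isASM_mk1 : IsASM (mk1 r c σ) := by
  refine ⟨?_, ?_, ?_, ?_, ?_⟩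
  · intro i j
    by_cases hi : i = r.1.2.1
    · subst hi
      rw [mk1_row_ri]
      exact three_entries _ _ _ c.ne13 j
    · rw [mk1_row r c σ i hi]
      split_ifs <;> norm_num
  · intro i
    by_cases hi : i = r.1.2.1
    · subst hi
      simp_rw [mk1_row_ri]
      exact three_sum _ _ _ c.ne13
    · simp_rw [mk1_row r c σ i hi]
      exact unit_sum _
  · intro j
    by_cases h1 : j = c.1.2.1
    · subst h1
      simp_rw [mk1_col_cj]
      exact three_sum _ _ _ r.ne13
    · by_cases h2 : j = c.1.1
      · subst h2; simp_rw [mk1_col_ca]; exact unit_sum _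
      · by_cases h3 : j = c.1.2.2
        · subst h3; simp_rw [mk1_col_cb]; exact unit_sum _
        · have hj : ¬(j = c.1.1 ∨ j = c.1.2.1 ∨ j = c.1.2.2) := by tauto
          simp_rw [mk1_col_other r c σ j hj]
          exact unit_sum _
  · intro i j
    by_cases hi : i = r.1.2.1
    · subst hi
      simp_rw [mk1_row_ri]
      exact three_partial _ _ _ c.2.1 c.2.2 j
    · simp_rw [mk1_row r c σ i hi]
      exact unit_partial _ _
  · intro i j
    by_cases h1 : j = c.1.2.1
    · subst h1
      simp_rw [mk1_col_cj]
      exact three_partial _ _ _ r.2.1 r.2.2 i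
    · by_cases h2 : j = c.1.1
      · subst h2; simp_rw [mk1_col_ca]; exact unit_partial _ _
      · by_cases h3 : j = c.1.2.2
        · subst h3; simp_rw [mk1_col_cb]; exact unit_partial _ _
        · have hj : ¬(j = c.1.1 ∨ j = c.1.2.1 ∨ j = c.1.2.2) := by tauto
          simp_rw [mk1_col_other r c σ j hj]
          exact unit_partial _ _

lemma mk1_neg_iff (i j : Fin n) :
    mk1 r c σ i j = -1 ↔ (i = r.1.2.1 ∧ j = c.1.2.1) := by
  by_cases hi : i = r.1.2.1
  · subst hi
    rw [mk1_row_ri]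
    rw [three_neg_iff _ _ _ c.ne12 (c.ne23).symm j]
    simp
  · rw [mk1_row r c σ i hi]
    constructor
    · intro h; split_ifs at h <;> norm_num at h
    · rintro ⟨h, -⟩; exact absurd h hi

lemma mk1_minus_card :
    (Finset.univ.filter (fun p : Fin n × Fin n => mk1 r c σ p.1 p.2 = -1)).card = 1 := by
  have : (Finset.univ.filter (fun p : Fin n × Fin n => mk1 r c σ p.1 p.2 = -1)) = {(r.1.2.1, c.1.2.1)} := by
    ext p
    simp only [Finset.mem_filter, Finset.mem_univ, true_and, Finset.mem_singleton,
      mk1_neg_iff, Prod.ext_iff]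
  rw [this, Finset.card_singleton]

end mk1b

section permM
variable {n : ℕ} (σ : Equiv.Perm (Fin n))

def permMat : Matrix (Fin n) (Fin n) ℤ := fun i j => if j = σ i then 1 else 0

lemma permMat_col (j i : Fin n) : permMat σ i j = if i = σ.symm j then 1 else 0 := by
  unfold permMat
  by_cases h : j = σ i
  · rw [if_pos h, if_pos (by rw [h, Equiv.symm_apply_apply])]
  · rw [if_neg h, if_neg (fun hh => h (by rw [hh, Equiv.apply_symm_apply]))]

lemma isASM_permMat : IsASM (permMat σ) := by
  refine ⟨?_, ?_, ?_, ?_, ?_⟩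
  · intro i j; unfold permMat; split_ifs <;> norm_num
  · intro i; unfold permMat; exact unit_sum _
  · intro j; simp_rw [permMat_col]; exact unit_sum _
  · intro i j; unfold permMat; exact unit_partial _ _
  · intro i j; simp_rw [permMat_col]; exact unit_partial _ _

lemma permMat_minus_card :
    (Finset.univ.filter (fun p : Fin n × Fin n => permMat σ p.1 p.2 = -1)).card = 0 := by
  rw [Finset.card_eq_zero, Finset.filter_eq_empty_iff]
  intro p _
  unfold permMat
  split_ifs <;> norm_num

end permM

section inj
variable {n : ℕ}

lemma three_eq_aux {a b a' b' j₀ : Fin n} (h1 : a < j₀) (h2 : j₀ < b) (h3 : a' < j₀) (h4 : j₀ < b')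
    (heq : ∀ j : Fin n, (if j = a then (1:ℤ) else 0) + (if j = b then 1 else 0) - (if j = j₀ then 1 else 0)
      = (if j = a' then 1 else 0) + (if j = b' then 1 else 0) - (if j = j₀ then 1 else 0)) :
    a = a' ∧ b = b' := by
  constructor
  · have key := heq a
    by_cases haa : a = a'
    · exact haa
    · exfalso
      simp only [if_pos rfl, if_neg (ne_of_lt (h1.trans h2)), if_neg (ne_of_lt h1),
        if_neg haa, if_neg (ne_of_lt (h1.trans h4))] at key
      norm_num at key
  · have key := heq b
    by_cases hbb : b = b'
    · exact hbb
    · exfalso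
      simp only [if_pos rfl, if_neg (ne_of_gt (h1.trans h2)), if_neg (ne_of_gt h2),
        if_neg hbb, if_neg (ne_of_gt (h3.trans h2))] at key
      norm_num at key

lemma mk1_injective {r r' c c' : Tri n} {σ : Cpl r ≃ Cpl c} {σ' : Cpl r' ≃ Cpl c'}
    (h : mk1 r c σ = mk1 r' c' σ') :
    (⟨r, ⟨c, σ⟩⟩ : Σ r : Tri n, Σ c : Tri n, Cpl r ≃ Cpl c) = ⟨r', ⟨c', σ'⟩⟩ := by
  have hpos : r.1.2.1 = r'.1.2.1 ∧ c.1.2.1 = c'.1.2.1 := by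
    have h1 : mk1 r' c' σ' r.1.2.1 c.1.2.1 = -1 := by
      rw [← h]; exact (mk1_neg_iff r c σ _ _).2 ⟨rfl, rfl⟩
    exact (mk1_neg_iff r' c' σ' _ _).1 h1
  obtain ⟨hri, hcj⟩ := hpos
  have hrow : ∀ j : Fin n,
      (if j = c.1.1 then (1:ℤ) else 0) + (if j = c.1.2.2 then 1 else 0) - (if j = c.1.2.1 then 1 else 0)
      = (if j = c'.1.1 then 1 else 0) + (if j = c'.1.2.2 then 1 else 0) - (if j = c.1.2.1 then 1 else 0) := by
    intro j
    have hj := congrFun (congrFun h r.1.2.1) j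
    rw [mk1_row_ri r c σ] at hj
    rw [show r.1.2.1 = r'.1.2.1 from hri, mk1_row_ri r' c' σ'] at hj
    rw [hj, hcj]
  obtain ⟨hca, hcb⟩ := three_eq_aux c.2.1 c.2.2 (hcj ▸ c'.2.1) (hcj ▸ c'.2.2) hrow
  have hcol : ∀ i : Fin n,
      (if i = r.1.1 then (1:ℤ) else 0) + (if i = r.1.2.2 then 1 else 0) - (if i = r.1.2.1 then 1 else 0)
      = (if i = r'.1.1 then 1 else 0) + (if i = r'.1.2.2 then 1 else 0) - (if i = r.1.2.1 then 1 else 0) := by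
    intro i
    have hi := congrFun (congrFun h i) c.1.2.1
    rw [mk1_col_cj r c σ] at hi
    rw [show c.1.2.1 = c'.1.2.1 from hcj, mk1_col_cj r' c' σ'] at hi
    rw [hi, hri]
  obtain ⟨hrc, hrd⟩ := three_eq_aux r.2.1 r.2.2 (hri ▸ r'.2.1) (hri ▸ r'.2.2) hcol
  have hr : r = r' := Subtype.ext (Prod.ext hrc (Prod.ext hri hrd))
  have hc : c = c' := Subtype.ext (Prod.ext hca (Prod.ext hcj hcb))
  subst hr hc
  have hσ : σ = σ' := by
    apply Equiv.ext
    intro x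
    apply Subtype.ext
    have hx := congrFun (congrFun h x.1) ((σ x : Fin n))
    rw [mk1_row r c σ x.1 (Cpl.ne2 x), mk1_row r c σ' x.1 (Cpl.ne2 x),
      gfun_cpl r c σ x.1 x.2, gfun_cpl r c σ' x.1 x.2, Subtype.coe_eta] at hx
    rw [if_pos rfl] at hx
    by_cases hk : (σ x : Fin n) = (σ' x : Fin n)
    · exact hk
    · rw [if_neg hk] at hx
      norm_num at hx
  rw [hσ]

end inj

lemma minus_row_aux {n : ℕ} (v : Fin n → ℤ) (j₀ a b : Fin n)
    (hab : a < b) (ha : a ≠ j₀) (hb : b ≠ j₀)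
    (hvf : v = fun j => (if j = a then 1 else 0) + (if j = b then 1 else 0) - (if j = j₀ then 1 else 0))
    (hp : ∀ j, ∑ l ∈ Finset.Iic j, v l = 0 ∨ ∑ l ∈ Finset.Iic j, v l = 1) :
    a < j₀ ∧ j₀ < b := by
  have hpart : ∀ j, ∑ l ∈ Finset.Iic j, v l =
      (if a ≤ j then (1:ℤ) else 0) + (if b ≤ j then 1 else 0) - (if j₀ ≤ j then 1 else 0) := by
    intro j
    simp only [hvf]
    rw [Finset.sum_sub_distrib, Finset.sum_add_distrib, sum_Iic_unit, sum_Iic_unit, sum_Iic_unit]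
  have h5 : j₀ < b := by
    have h5' : j₀ ≤ b := by
      by_contra hc
      rcases hp b with h' | h' <;>
        rw [hpart, if_pos hab.le, if_pos le_rfl, if_neg hc] at h' <;> norm_num at h'
    exact lt_of_le_of_ne h5' (Ne.symm hb)
  have h6 : a ≤ j₀ := by
    by_contra hc
    have hbj : ¬ b ≤ j₀ := not_le.mpr h5
    rcases hp j₀ with h' | h' <;>
      rw [hpart, if_neg hc, if_neg hbj, if_pos le_rfl] at h' <;> norm_num at h'
  exact ⟨lt_of_le_of_ne h6 ha, h5⟩

lemma minus_row {n : ℕ} (v : Fin n → ℤ) (j₀ : Fin n)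
    (hm : ∀ j, v j = -1 ↔ j = j₀)
    (h0 : ∀ j, v j = -1 ∨ v j = 0 ∨ v j = 1) (h1 : ∑ j, v j = 1)
    (hp : ∀ j, ∑ l ∈ Finset.Iic j, v l = 0 ∨ ∑ l ∈ Finset.Iic j, v l = 1) :
    ∃ a b, a < j₀ ∧ j₀ < b ∧
      v = fun j => (if j = a then 1 else 0) + (if j = b then 1 else 0) - (if j = j₀ then 1 else 0) := by
  set P : Finset (Fin n) := Finset.univ.filter (fun j => v j = 1) with hP
  have hj₀ : v j₀ = -1 := (hm j₀).2 rfl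
  have hj₀P : j₀ ∉ P := by simp [hP, hj₀]
  have hv : ∀ j, v j = (if j ∈ P then 1 else 0) - (if j = j₀ then 1 else 0) := by
    intro j
    by_cases hj : j = j₀
    · rw [hj, hj₀, if_neg hj₀P, if_pos rfl]; ring
    · have hne : v j ≠ -1 := fun h => hj ((hm j).1 h)
      rcases h0 j with h | h | h
      · exact absurd h hne
      · simp [hP, h, hj]
      · simp [hP, h, hj]
  have hsum : ∑ j, v j = (P.card : ℤ) - 1 := by
    simp_rw [hv]
    rw [Finset.sum_sub_distrib]
    simp
  rw [h1] at hsum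
  have hcard : P.card = 2 := by
    have : (P.card : ℤ) = 2 := by linarith
    exact_mod_cast this
  obtain ⟨a, b, hab, hPab⟩ := Finset.card_eq_two.mp hcard
  have haP : a ∈ P := by rw [hPab]; simp
  have hbP : b ∈ P := by rw [hPab]; simp
  have haj : a ≠ j₀ := fun h => hj₀P (h ▸ haP)
  have hbj : b ≠ j₀ := fun h => hj₀P (h ▸ hbP)
  have hvf : v = fun j => (if j = a then 1 else 0) + (if j = b then 1 else 0) - (if j = j₀ then 1 else 0) := by
    funext j
    rw [hv j, hPab]
    by_cases h1' : j = a <;> by_cases h2' : j = b <;>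
      simp [h1', h2', hab, Ne.symm hab, hj₀P] <;> simp_all
  rcases hab.lt_or_gt with hlt | hlt
  · obtain ⟨u, w⟩ := minus_row_aux v j₀ a b hlt haj hbj hvf hp
    exact ⟨a, b, u, w, hvf⟩
  · have hvf' : v = fun j => (if j = b then 1 else 0) + (if j = a then 1 else 0) - (if j = j₀ then 1 else 0) := by
      rw [hvf]; funext j; ring
    obtain ⟨u, w⟩ := minus_row_aux v j₀ b a hlt hbj haj hvf' hp
    exact ⟨b, a, u, w, hvf'⟩

section recon
variable {n : ℕ}

lemma unit_row {n : ℕ} (v : Fin n → ℤ) (h0 : ∀ j, v j = 0 ∨ v j = 1) (h1 : ∑ j, v j = 1) :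
    ∃ a, v = fun j => if j = a then 1 else 0 := by
  set P : Finset (Fin n) := Finset.univ.filter (fun j => v j = 1) with hP
  have hv : ∀ j, v j = if j ∈ P then 1 else 0 := by
    intro j
    rcases h0 j with h | h <;> simp [hP, h]
  have hsum : ∑ j, v j = (P.card : ℤ) := by
    simp_rw [hv]; simp
  rw [h1] at hsum
  have : P.card = 1 := by exact_mod_cast hsum.symm
  obtain ⟨a, ha⟩ := Finset.card_eq_one.mp this
  refine ⟨a, funext fun j => ?_⟩
  rw [hv j, ha]
  simp

lemma cpl_card (t : Tri n) : Fintype.card (Cpl t) = n - 3 := by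
  rw [Fintype.card_subtype]
  have heq : Finset.univ.filter (fun x : Fin n => ¬(x = t.1.1 ∨ x = t.1.2.1 ∨ x = t.1.2.2))
      = Finset.univ \ {t.1.1, t.1.2.1, t.1.2.2} := by
    ext x
    simp [not_or]
  rw [heq, Finset.card_sdiff_of_subset (Finset.subset_univ _), Finset.card_univ, Fintype.card_fin]
  congr 1
  rw [Finset.card_insert_of_notMem (by simp [t.ne12, t.ne13]),
    Finset.card_insert_of_notMem (by simp [t.ne23]), Finset.card_singleton]

lemma exists_perm_of_no_minus (A : Matrix (Fin n) (Fin n) ℤ) (hA : IsASM A)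
    (h0 : ∀ i j, A i j ≠ -1) : ∃ σ : Equiv.Perm (Fin n), A = permMat σ := by
  obtain ⟨he, hrow, hcol, -, -⟩ := hA
  have hur : ∀ i : Fin n, ∃ y, A i = fun j => if j = y then 1 else 0 := by
    intro i
    refine unit_row (A i) (fun j => ?_) (hrow i)
    rcases he i j with h | h | h
    · exact absurd h (h0 i j)
    · exact Or.inl h
    · exact Or.inr h
  choose g hg using hur
  have hcolcard : ∀ y : Fin n, (Finset.univ.filter (fun i => y = g i)).card = 1 := by
    intro y
    have : ∑ i, A i y = ((Finset.univ.filter (fun i => y = g i)).card : ℤ) := by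
      have : ∀ i, A i y = if y = g i then 1 else 0 := fun i => by rw [hg i]
      simp_rw [this]
      simp
    rw [hcol y] at this
    exact_mod_cast this.symm
  have hinj : Function.Injective g := by
    intro i i' hii'
    obtain ⟨z, hz⟩ := Finset.card_eq_one.mp (hcolcard (g i))
    have h1 : i ∈ Finset.univ.filter (fun k => g i = g k) := by simp
    have h2 : i' ∈ Finset.univ.filter (fun k => g i = g k) := by simp [hii']
    rw [hz, Finset.mem_singleton] at h1 h2
    rw [h1, h2]
  have hbij : Function.Bijective g := (Finite.injective_iff_bijective).1 hinj
  exact ⟨Equiv.ofBijective g hbij, funext fun i => by rw [hg i]; rfl⟩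

lemma exists_mk1_of_one_minus (A : Matrix (Fin n) (Fin n) ℤ) (hA : IsASM A)
    (hone : (Finset.univ.filter (fun p : Fin n × Fin n => A p.1 p.2 = -1)).card = 1) :
    ∃ (r c : Tri n) (σ : Cpl r ≃ Cpl c), A = mk1 r c σ := by
  obtain ⟨he, hrow, hcol, hprow, hpcol⟩ := hA
  obtain ⟨p₀, hp₀⟩ := Finset.card_eq_one.mp hone
  have hminus : ∀ i j, A i j = -1 ↔ (i = p₀.1 ∧ j = p₀.2) := by
    intro i j
    constructor
    · intro h
      have : (i, j) ∈ Finset.univ.filter (fun p : Fin n × Fin n => A p.1 p.2 = -1) := by simp [h]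
      rw [hp₀, Finset.mem_singleton] at this
      exact ⟨congrArg Prod.fst this, congrArg Prod.snd this⟩
    · rintro ⟨rfl, rfl⟩
      have : p₀ ∈ Finset.univ.filter (fun p : Fin n × Fin n => A p.1 p.2 = -1) := by
        rw [hp₀]; simp
      simpa using this
  set i₀ := p₀.1 with hi₀
  set j₀ := p₀.2 with hj₀
  obtain ⟨ca, cb, hca, hcb, hrowf⟩ := minus_row (A i₀) j₀
    (fun j => by rw [hminus]; simp) (he i₀) (hrow i₀) (hprow i₀)
  obtain ⟨rc, rd, hrc, hrd, hcolf⟩ := minus_row (fun i => A i j₀) i₀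
    (fun i => by rw [hminus]; simp) (fun i => he i j₀) (hcol j₀) (fun i => hpcol i j₀)
  set r : Tri n := ⟨(rc, i₀, rd), hrc, hrd⟩ with hr
  set c : Tri n := ⟨(ca, j₀, cb), hca, hcb⟩ with hc
  have hur : ∀ i : Fin n, ∃ y, i ≠ i₀ → A i = fun j => if j = y then 1 else 0 := by
    intro i
    by_cases hi : i = i₀
    · exact ⟨j₀, fun h => absurd hi h⟩
    · obtain ⟨y, hy⟩ := unit_row (A i) (fun j => by
        rcases he i j with h | h | h
        · exact absurd ((hminus i j).1 h).1 hi
        · exact Or.inl h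
        · exact Or.inr h) (hrow i)
      exact ⟨y, fun _ => hy⟩
  choose g hg using hur
  have huc : ∀ j : Fin n, ∃ x, j ≠ j₀ → (fun i => A i j) = fun i => if i = x then 1 else 0 := by
    intro j
    by_cases hj : j = j₀
    · exact ⟨i₀, fun h => absurd hj h⟩
    · obtain ⟨x, hx⟩ := unit_row (fun i => A i j) (fun i => by
        rcases he i j with h | h | h
        · exact absurd ((hminus i j).1 h).2 hj
        · exact Or.inl h
        · exact Or.inr h) (hcol j)
      exact ⟨x, fun _ => hx⟩
  choose s hs using huc
  -- basic distinctness
  have hcane : ca ≠ j₀ := ne_of_lt hca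
  have hcbne : cb ≠ j₀ := ne_of_gt hcb
  have hrcne : rc ≠ i₀ := ne_of_lt hrc
  have hrdne : rd ≠ i₀ := ne_of_gt hrd
  -- values from row/col formulas
  have hAca : A i₀ ca = 1 := by
    have := congrFun hrowf ca
    rwa [if_pos rfl, if_neg (ne_of_lt (hca.trans hcb)), if_neg hcane, add_zero, sub_zero] at this
  have hAcb : A i₀ cb = 1 := by
    have := congrFun hrowf cb
    rwa [if_neg (ne_of_gt (hca.trans hcb)), if_pos rfl, if_neg hcbne, zero_add, sub_zero] at this
  have hArc : A rc j₀ = 1 := by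
    have := congrFun hcolf rc
    rwa [if_pos rfl, if_neg (ne_of_lt (hrc.trans hrd)), if_neg hrcne, add_zero, sub_zero] at this
  have hArd : A rd j₀ = 1 := by
    have := congrFun hcolf rd
    rwa [if_neg (ne_of_gt (hrc.trans hrd)), if_pos rfl, if_neg hrdne, zero_add, sub_zero] at this
  have hsca : s ca = i₀ := by
    have h1 := congrFun (hs ca hcane) i₀
    rw [hAca] at h1
    by_contra hcon
    rw [if_neg (fun h => hcon h.symm)] at h1
    norm_num at h1
  have hscb : s cb = i₀ := by
    have h1 := congrFun (hs cb hcbne) i₀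
    rw [hAcb] at h1
    by_contra hcon
    rw [if_neg (fun h => hcon h.symm)] at h1
    norm_num at h1
  have hgrc : g rc = j₀ := by
    have h1 := congrFun (hg rc hrcne) j₀
    rw [hArc] at h1
    by_contra hcon
    rw [if_neg (Ne.symm hcon)] at h1
    norm_num at h1
  have hgrd : g rd = j₀ := by
    have h1 := congrFun (hg rd hrdne) j₀
    rw [hArd] at h1
    by_contra hcon
    rw [if_neg (Ne.symm hcon)] at h1
    norm_num at h1
  -- for i in complement, g i is in complement
  have hmem : ∀ i : Fin n, ¬(i = rc ∨ i = i₀ ∨ i = rd) → ¬(g i = ca ∨ g i = j₀ ∨ g i = cb) := by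
    intro i hi
    push_neg at hi
    obtain ⟨hi1, hi2, hi3⟩ := hi
    have hAij₀ : A i j₀ = 0 := by
      have := congrFun hcolf i
      rwa [if_neg hi1, if_neg hi3, if_neg hi2, add_zero, sub_zero] at this
    have hAica : A i ca = 0 := by
      have h1 := congrFun (hs ca hcane) i
      rw [if_neg (by rw [hsca]; exact hi2)] at h1
      exact h1
    have hAicb : A i cb = 0 := by
      have h1 := congrFun (hs cb hcbne) i
      rw [if_neg (by rw [hscb]; exact hi2)] at h1
      exact h1
    push_neg
    refine ⟨?_, ?_, ?_⟩
    · intro hcon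
      have := congrFun (hg i hi2) ca
      rw [hAica, if_pos hcon.symm] at this
      norm_num at this
    · intro hcon
      have := congrFun (hg i hi2) j₀
      rw [hAij₀, if_pos hcon.symm] at this
      norm_num at this
    · intro hcon
      have := congrFun (hg i hi2) cb
      rw [hAicb, if_pos hcon.symm] at this
      norm_num at this
  set σ0 : Cpl r → Cpl c := fun x => ⟨g x.1, hmem x.1 x.2⟩ with hσ0
  have hinj : Function.Injective σ0 := by
    intro x y hxy
    have hgxy : g x.1 = g y.1 := congrArg Subtype.val hxy
    have hjne : g x.1 ≠ j₀ := fun h => (hmem x.1 x.2) (Or.inr (Or.inl h))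
    have hx1 : A x.1 (g x.1) = 1 := by
      have := congrFun (hg x.1 (fun h => x.2 (Or.inr (Or.inl h)))) (g x.1)
      rwa [if_pos rfl] at this
    have hy1 : A y.1 (g x.1) = 1 := by
      have := congrFun (hg y.1 (fun h => y.2 (Or.inr (Or.inl h)))) (g x.1)
      rwa [if_pos hgxy] at this
    have hx2 : x.1 = s (g x.1) := by
      have h1 := congrFun (hs (g x.1) hjne) x.1
      rw [hx1] at h1
      by_contra hcon
      rw [if_neg hcon] at h1
      norm_num at h1
    have hy2 : y.1 = s (g x.1) := by
      have h1 := congrFun (hs (g x.1) hjne) y.1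
      rw [hy1] at h1
      by_contra hcon
      rw [if_neg hcon] at h1
      norm_num at h1
    exact Subtype.ext (hx2.trans hy2.symm)
  have hbij : Function.Bijective σ0 := by
    rw [Fintype.bijective_iff_injective_and_card]
    exact ⟨hinj, by rw [cpl_card, cpl_card]⟩
  refine ⟨r, c, Equiv.ofBijective σ0 hbij, ?_⟩
  funext i j
  by_cases hi : i = i₀
  · subst hi
    rw [show mk1 r c (Equiv.ofBijective σ0 hbij) i₀ j =
      ((if j = ca then (1:ℤ) else 0) + (if j = cb then 1 else 0) - (if j = j₀ then 1 else 0))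
      from if_pos rfl]
    exact congrFun hrowf j
  · rw [mk1_row r c _ i hi, congrFun (hg i hi) j]
    congr 1
    unfold gfun
    by_cases hcpl : ¬(i = rc ∨ i = i₀ ∨ i = rd)
    · rw [dif_pos hcpl]
      rfl
    · rw [dif_neg hcpl]
      push_neg at hcpl
      rcases hcpl with h' | h' | h'
      · rw [h', hgrc]
      · exact absurd h' hi
      · rw [h', hgrd]
end recon

section count
variable {n : ℕ}

lemma order3 (x y z : Fin n) (hxy : x ≠ y) (hxz : x ≠ z) (hyz : y ≠ z) :
    ∃ a b c : Fin n, a < b ∧ b < c ∧ ({x, y, z} : Finset (Fin n)) = {a, b, c} := by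
  rcases hxy.lt_or_gt with h1 | h1 <;> rcases hxz.lt_or_gt with h2 | h2 <;>
    rcases hyz.lt_or_gt with h3 | h3
  · exact ⟨x, y, z, h1, h3, rfl⟩
  · exact ⟨x, z, y, h2, h3, by ext u; simp; tauto⟩
  · exact absurd (h2.trans (h1.trans h3)) (lt_irrefl z)
  · exact ⟨z, x, y, h2, h1, by ext u; simp; tauto⟩
  · exact ⟨y, x, z, h1, h2, by ext u; simp; tauto⟩
  · exact absurd (h1.trans (h2.trans h3)) (lt_irrefl y)
  · exact ⟨y, z, x, h3, h2, by ext u; simp; tauto⟩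
  · exact ⟨z, y, x, h3, h1, by ext u; simp; tauto⟩

def triToFinset (t : Tri n) : {s : Finset (Fin n) // s.card = 3} :=
  ⟨{t.1.1, t.1.2.1, t.1.2.2}, by
    rw [Finset.card_insert_of_notMem (by simp [t.ne12, t.ne13]),
      Finset.card_insert_of_notMem (by simp [t.ne23]), Finset.card_singleton]⟩

lemma triToFinset_bij : Function.Bijective (triToFinset (n := n)) := by
  constructor
  · intro t t' h
    have hset : ({t.1.1, t.1.2.1, t.1.2.2} : Finset (Fin n)) = {t'.1.1, t'.1.2.1, t'.1.2.2} :=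
      congrArg Subtype.val h
    rw [Finset.ext_iff] at hset
    have m1 := (hset t.1.1).1 (by simp)
    have m2 := (hset t.1.2.1).1 (by simp)
    have m3 := (hset t.1.2.2).1 (by simp)
    have m4 := (hset t'.1.1).2 (by simp)
    have m5 := (hset t'.1.2.1).2 (by simp)
    have m6 := (hset t'.1.2.2).2 (by simp)
    simp only [Finset.mem_insert, Finset.mem_singleton, Fin.ext_iff] at m1 m2 m3 m4 m5 m6
    have o1 := t.2.1
    have o2 := t.2.2
    have o3 := t'.2.1
    have o4 := t'.2.2
    simp only [Fin.lt_def] at o1 o2 o3 o4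
    have e1 : t.1.1.val = t'.1.1.val ∧ t.1.2.1.val = t'.1.2.1.val ∧ t.1.2.2.val = t'.1.2.2.val := by
      omega
    exact Subtype.ext (Prod.ext (Fin.ext e1.1) (Prod.ext (Fin.ext e1.2.1) (Fin.ext e1.2.2)))
  · rintro ⟨s, hs⟩
    obtain ⟨x, y, z, hxy, hxz, hyz, rfl⟩ := Finset.card_eq_three.mp hs
    obtain ⟨a, b, c, hab, hbc, hseteq⟩ := order3 x y z hxy hxz hyz
    exact ⟨⟨(a, b, c), hab, hbc⟩, Subtype.ext hseteq.symm⟩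

lemma tri_card : Fintype.card (Tri n) = Nat.choose n 3 := by
  rw [Fintype.card_of_bijective triToFinset_bij, Fintype.card_finset_len, Fintype.card_fin]

end count

abbrev ASMData (n : ℕ) := Equiv.Perm (Fin n) ⊕ Σ r : Tri n, Σ c : Tri n, Cpl r ≃ Cpl c

def toASM {n : ℕ} : ASMData n → Matrix (Fin n) (Fin n) ℤ :=
  Sum.elim permMat (fun x => mk1 x.1 x.2.1 x.2.2)

lemma toASM_inj {n : ℕ} : Function.Injective (toASM (n := n)) := by
  intro u v h
  match u, v with
  | .inl σ, .inl τ =>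
    have hστ : σ = τ := by
      apply Equiv.ext
      intro i
      have := congrFun (congrFun h i) (σ i)
      simp only [toASM, Sum.elim_inl] at this
      unfold permMat at this
      rw [if_pos rfl] at this
      by_contra hcon
      rw [if_neg (fun hh : σ i = τ i => hcon hh)] at this
      norm_num at this
    rw [hστ]
  | .inl σ, .inr x =>
    exfalso
    have h1 : mk1 x.1 x.2.1 x.2.2 x.1.1.2.1 x.2.1.1.2.1 = -1 :=
      (mk1_neg_iff _ _ _ _ _).2 ⟨rfl, rfl⟩
    have h2 := congrFun (congrFun h x.1.1.2.1) x.2.1.1.2.1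
    simp only [toASM, Sum.elim_inl, Sum.elim_inr] at h2
    rw [h1] at h2
    unfold permMat at h2
    split_ifs at h2 <;> norm_num at h2
  | .inr x, .inl σ =>
    exfalso
    have h1 : mk1 x.1 x.2.1 x.2.2 x.1.1.2.1 x.2.1.1.2.1 = -1 :=
      (mk1_neg_iff _ _ _ _ _).2 ⟨rfl, rfl⟩
    have h2 := congrFun (congrFun h x.1.1.2.1) x.2.1.1.2.1
    simp only [toASM, Sum.elim_inl, Sum.elim_inr] at h2
    rw [h1] at h2
    unfold permMat at h2
    split_ifs at h2 <;> norm_num at h2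
  | .inr x, .inr y =>
    obtain ⟨r, c, σ⟩ := x
    obtain ⟨r', c', σ'⟩ := y
    have h' : mk1 r c σ = mk1 r' c' σ' := by
      simpa only [toASM, Sum.elim_inr] using h
    exact congrArg Sum.inr (mk1_injective h')

lemma toASM_range {n : ℕ} : Set.range (toASM (n := n)) =
    {A : Matrix (Fin n) (Fin n) ℤ | IsASM A ∧
      (Finset.univ.filter (fun p : Fin n × Fin n => A p.1 p.2 = -1)).card ≤ 1} := by
  ext A
  constructor
  · rintro ⟨u, rfl⟩
    match u with
    | .inl σ =>
      exact ⟨isASM_permMat σ, by rw [show toASM (Sum.inl σ) = permMat σ from rfl, permMat_minus_card]; norm_num⟩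
    | .inr x =>
      exact ⟨isASM_mk1 x.1 x.2.1 x.2.2, by
        rw [show toASM (Sum.inr x) = mk1 x.1 x.2.1 x.2.2 from rfl, mk1_minus_card]⟩
  · rintro ⟨hASM, hcard⟩
    rcases Nat.le_one_iff_eq_zero_or_eq_one.mp hcard with h | h
    · rw [Finset.card_eq_zero, Finset.filter_eq_empty_iff] at h
      obtain ⟨σ, hσ⟩ := exists_perm_of_no_minus A hASM (fun i j => h (Finset.mem_univ (i, j)))
      exact ⟨Sum.inl σ, hσ.symm⟩
    · obtain ⟨r, c, σ, hA⟩ := exists_mk1_of_one_minus A hASM h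
      exact ⟨Sum.inr ⟨r, c, σ⟩, hA.symm⟩

lemma asmdata_card (n : ℕ) : Fintype.card (ASMData n) =
    Nat.factorial n + Nat.choose n 3 * (Nat.choose n 3 * Nat.factorial (n - 3)) := by
  rw [Fintype.card_sum, Fintype.card_perm, Fintype.card_fin]
  congr 1
  rw [Fintype.card_sigma]
  have hfib : ∀ r : Tri n, Fintype.card (Σ c : Tri n, Cpl r ≃ Cpl c)
      = Nat.choose n 3 * Nat.factorial (n - 3) := by
    intro r
    rw [Fintype.card_sigma]
    have : ∀ c : Tri n, Fintype.card (Cpl r ≃ Cpl c) = Nat.factorial (n - 3) := by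
      intro c
      have e : Cpl r ≃ Cpl c := Fintype.equivOfCardEq (by rw [cpl_card, cpl_card])
      rw [Fintype.card_equiv e, cpl_card]
    simp_rw [this]
    rw [Finset.sum_const, Finset.card_univ, tri_card, smul_eq_mul]
  simp_rw [hfib]
  rw [Finset.sum_const, Finset.card_univ, tri_card, smul_eq_mul]

lemma arith (n : ℕ) :
    Nat.choose n 3 * (Nat.choose n 3 * Nat.factorial (n - 3)) = Nat.factorial n * Nat.choose n 3 / 6 := by
  by_cases h : 3 ≤ n
  · have key := Nat.choose_mul_factorial_mul_factorial h
    have h6 : Nat.factorial 3 = 6 := rfl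
    have : Nat.factorial n * Nat.choose n 3 = 6 * (Nat.choose n 3 * (Nat.choose n 3 * Nat.factorial (n - 3))) := by
      rw [← key, h6]
      ring
    rw [this, Nat.mul_div_cancel_left _ (by norm_num : 0 < 6)]
  · rw [Nat.choose_eq_zero_of_lt (by omega)]
    simp

theorem statement16 (n : ℕ) :
    {A : Matrix (Fin n) (Fin n) ℤ | IsASM A ∧
      (Finset.univ.filter (fun p : Fin n × Fin n => A p.1 p.2 = -1)).card ≤ 1}.ncard =
    Nat.factorial n * Nat.choose n 3 / 6 + Nat.factorial n := by
  rw [← toASM_range, ← Nat.card_coe_set_eq, Nat.card_range_of_injective toASM_inj,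
    Nat.card_eq_fintype_card, asmdata_card, arith]
  omega
end
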